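/- arXiv:2311.02974 — 8 statements merged into one kernel-verified Lean document; each statement's English description precedes it below -/
import Mathlib

section
/- The number of permutations of length n avoiding both patterns 231 and 312 is 2^(n-1) for all n ≥ 1. -/
/-- The value of `π` at position `i` (0-based), as a natural number; `0` if out of range. -/
def pv {n : ℕ} (π : Equiv.Perm (Fin n)) (i : ℕ) : ℕ :=
  if h : i < n then (π ⟨i, h⟩ : ℕ) else 0

/-- The set of ascent positions (0-based) of `π`. -/
def ascents {n : ℕ} (π : Equiv.Perm (Fin n)) : Finset ℕ :=
  (Finset.range (n - 1)).filter fun i => pv π i < pv π (i + 1)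

/-- The set of descent positions (0-based) of `π`. -/
def descents {n : ℕ} (π : Equiv.Perm (Fin n)) : Finset ℕ :=
  (Finset.range (n - 1)).filter fun i => pv π (i + 1) < pv π i

def asc {n : ℕ} (π : Equiv.Perm (Fin n)) : ℕ := (ascents π).card

def des {n : ℕ} (π : Equiv.Perm (Fin n)) : ℕ := (descents π).card

/-- The maximum number of non-overlapping ascents of `π`. -/
noncomputable def MNA {n : ℕ} (π : Equiv.Perm (Fin n)) : ℕ :=
  sSup {k | ∃ S ⊆ ascents π, S.card = k ∧ ∀ i ∈ S, ∀ j ∈ S, i < j → i + 1 < j}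

/-- The maximum number of non-overlapping descents of `π`. -/
noncomputable def MND {n : ℕ} (π : Equiv.Perm (Fin n)) : ℕ :=
  sSup {k | ∃ S ⊆ descents π, S.card = k ∧ ∀ i ∈ S, ∀ j ∈ S, i < j → i + 1 < j}

def IsLRMax {n : ℕ} (π : Equiv.Perm (Fin n)) (i : Fin n) : Prop := ∀ j, j < i → π j < π i
def IsRLMax {n : ℕ} (π : Equiv.Perm (Fin n)) (i : Fin n) : Prop := ∀ j, i < j → π j < π i
def IsLRMin {n : ℕ} (π : Equiv.Perm (Fin n)) (i : Fin n) : Prop := ∀ j, j < i → π i < π j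
def IsRLMin {n : ℕ} (π : Equiv.Perm (Fin n)) (i : Fin n) : Prop := ∀ j, i < j → π i < π j

noncomputable def lrmax {n : ℕ} (π : Equiv.Perm (Fin n)) : ℕ := Nat.card {i : Fin n // IsLRMax π i}
noncomputable def rlmax {n : ℕ} (π : Equiv.Perm (Fin n)) : ℕ := Nat.card {i : Fin n // IsRLMax π i}
noncomputable def lrmin {n : ℕ} (π : Equiv.Perm (Fin n)) : ℕ := Nat.card {i : Fin n // IsLRMin π i}
noncomputable def rlmin {n : ℕ} (π : Equiv.Perm (Fin n)) : ℕ := Nat.card {i : Fin n // IsRLMin π i}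

def Avoids123 {n : ℕ} (π : Equiv.Perm (Fin n)) : Prop :=
  ¬ ∃ i j k : Fin n, i < j ∧ j < k ∧ π i < π j ∧ π j < π k
def Avoids132 {n : ℕ} (π : Equiv.Perm (Fin n)) : Prop :=
  ¬ ∃ i j k : Fin n, i < j ∧ j < k ∧ π i < π k ∧ π k < π j
def Avoids213 {n : ℕ} (π : Equiv.Perm (Fin n)) : Prop :=
  ¬ ∃ i j k : Fin n, i < j ∧ j < k ∧ π j < π i ∧ π i < π k
def Avoids231 {n : ℕ} (π : Equiv.Perm (Fin n)) : Prop :=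
  ¬ ∃ i j k : Fin n, i < j ∧ j < k ∧ π k < π i ∧ π i < π j
def Avoids312 {n : ℕ} (π : Equiv.Perm (Fin n)) : Prop :=
  ¬ ∃ i j k : Fin n, i < j ∧ j < k ∧ π j < π k ∧ π k < π i
def Avoids321 {n : ℕ} (π : Equiv.Perm (Fin n)) : Prop :=
  ¬ ∃ i j k : Fin n, i < j ∧ j < k ∧ π k < π j ∧ π j < π i

/-!
An avoider of 231 and 312 descends from position `i` to a later position `j` (`π j < π i`) exactly
when it descends at every step in between: an ascent inside such a stretch completes one of the
two patterns. Hence the relative order of the values, and so the permutation itself, is determined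
by the ascent set. Conversely every `S ⊆ {0, …, n - 2}` is the ascent set of an avoider: cut
`0, …, n - 1` after the positions in `S` and reverse each block. So `π ↦ ascents π` is a bijection
from the avoiders onto the subsets of `{0, …, n - 2}`.
-/

theorem Equiv.Perm.eq_of_lt_iff_lt {α : Type*} [LinearOrder α] [Finite α] {π σ : Equiv.Perm α}
    (h : ∀ i j, π i < π j ↔ σ i < σ j) : π = σ := by
  have hmono : StrictMono (π ∘ σ.symm) := fun x y hxy => by simpa [h] using hxy
  ext1 i
  simpa using congrFun hmono.eq_id (σ i)

section Avoiders

variable {n : ℕ} {π : Equiv.Perm (Fin n)} {i j k : ℕ}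

lemma pv_of_lt (h : i < n) : pv π i = π ⟨i, h⟩ := dif_pos h

lemma pv_val (i : Fin n) : pv π i = π i := pv_of_lt i.isLt

lemma eq_of_pv_eq (hi : i < n) (hj : j < n) (h : pv π i = pv π j) : i = j := by
  rw [pv_of_lt hi, pv_of_lt hj] at h
  simpa using π.injective (Fin.val_injective h)

lemma mem_ascents : i ∈ ascents π ↔ i + 1 < n ∧ pv π i < pv π (i + 1) := by
  simp only [ascents, Finset.mem_filter, Finset.mem_range]
  omega

lemma Avoids231.not_pattern_pv (h : Avoids231 π) (hij : i < j) (hjk : j < k) (hk : k < n) :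
    ¬ (pv π k < pv π i ∧ pv π i < pv π j) := by
  rintro ⟨hki, hij'⟩
  refine h ⟨⟨i, by omega⟩, ⟨j, by omega⟩, ⟨k, hk⟩, hij, hjk, ?_, ?_⟩ <;>
    rwa [Fin.lt_def, ← pv_of_lt, ← pv_of_lt]

lemma Avoids312.not_pattern_pv (h : Avoids312 π) (hij : i < j) (hjk : j < k) (hk : k < n) :
    ¬ (pv π j < pv π k ∧ pv π k < pv π i) := by
  rintro ⟨hjk', hki⟩
  refine h ⟨⟨i, by omega⟩, ⟨j, by omega⟩, ⟨k, hk⟩, hij, hjk, ?_, ?_⟩ <;>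
    rwa [Fin.lt_def, ← pv_of_lt, ← pv_of_lt]

lemma pv_lt_pv_of_forall_not_mem_ascents (hij : i < j) (hj : j < n)
    (h : ∀ k, i ≤ k → k < j → k ∉ ascents π) : pv π j < pv π i := by
  induction j with
  | zero => omega
  | succ m ih =>
    have hne : pv π (m + 1) ≠ pv π m := fun he => absurd (eq_of_pv_eq hj (by omega) he) (by omega)
    have hstep : pv π (m + 1) < pv π m := by
      have hm := h m (by omega) (by omega)
      rw [mem_ascents] at hm
      omega
    rcases Nat.lt_or_ge i m with him | hmi
    · exact hstep.trans (ih him (by omega) fun k hk1 hk2 => h k hk1 (by omega))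
    · rwa [show i = m by omega]

lemma pv_lt_pv_iff_forall_not_mem_ascents (h231 : Avoids231 π) (h312 : Avoids312 π)
    (hij : i < j) (hj : j < n) :
    pv π j < pv π i ↔ ∀ k, i ≤ k → k < j → k ∉ ascents π := by
  refine ⟨fun hji k hik hkj hk => ?_, pv_lt_pv_of_forall_not_mem_ascents hij hj⟩
  -- an ascent `k, k + 1` inside the descent from `i` to `j` completes a 231 or a 312
  rw [mem_ascents] at hk
  have hne {a b : ℕ} (ha : a < n) (hb : b < n) (hab : a ≠ b) : pv π a ≠ pv π b :=
    fun he => hab (eq_of_pv_eq ha hb he)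
  rcases Nat.lt_or_gt_of_ne (hne (a := i) (b := k + 1) (by omega) hk.1 (by omega)) with hi | hi
  · obtain rfl | hkj' : k + 1 = j ∨ k + 1 < j := by omega
    · omega
    · exact h231.not_pattern_pv (by omega) hkj' hj ⟨hji, hi⟩
  · have hik' : i < k := by
      rcases hik.lt_or_eq with hik' | rfl
      · exact hik'
      · omega
    rcases Nat.lt_or_gt_of_ne (hne (a := k) (b := j) (by omega) hj (by omega)) with hkj' | hkj'
    · exact h312.not_pattern_pv hik' hkj hj ⟨hkj', hji⟩
    · obtain rfl | hkj'' : k + 1 = j ∨ k + 1 < j := by omega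
      · omega
      · exact h231.not_pattern_pv (by omega) hkj'' hj ⟨hkj', hk.2⟩

theorem eq_of_ascents_eq {σ : Equiv.Perm (Fin n)} (hπ : Avoids231 π ∧ Avoids312 π)
    (hσ : Avoids231 σ ∧ Avoids312 σ) (h : ascents π = ascents σ) : π = σ := by
  have hdesc : ∀ i j : Fin n, i < j → (π j < π i ↔ σ j < σ i) := by
    intro i j hij
    simp only [Fin.lt_def, ← pv_val] at hij ⊢
    rw [pv_lt_pv_iff_forall_not_mem_ascents hπ.1 hπ.2 hij j.isLt,
      pv_lt_pv_iff_forall_not_mem_ascents hσ.1 hσ.2 hij j.isLt, h]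
  refine Equiv.Perm.eq_of_lt_iff_lt fun i j => ?_
  rcases lt_trichotomy i j with hij | rfl | hij
  · have := hdesc i j hij
    have := π.injective.ne hij.ne
    have := σ.injective.ne hij.ne
    omega
  · simp
  · exact hdesc j i hij

end Avoiders

namespace BlockReversal

def blockStart (S : Finset ℕ) (i : ℕ) : ℕ := Nat.findGreatest (fun j => 0 < j ∧ j - 1 ∈ S) i

def blockEnd (n : ℕ) (S : Finset ℕ) (i : ℕ) : ℕ :=
  Nat.find (p := fun j => i ≤ j ∧ (j ∈ S ∨ n ≤ j + 1)) ⟨i + n, by omega, Or.inr (by omega)⟩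

variable {n : ℕ} {S : Finset ℕ} {i j k a b : ℕ}

lemma le_blockEnd : i ≤ blockEnd n S i := (Nat.find_spec (p := fun j => i ≤ j ∧ _) _).1

lemma blockEnd_mem_or : blockEnd n S i ∈ S ∨ n ≤ blockEnd n S i + 1 :=
  (Nat.find_spec (p := fun j => i ≤ j ∧ (j ∈ S ∨ n ≤ j + 1)) _).2

lemma blockEnd_lt (hi : i < n) : blockEnd n S i < n := by
  have : blockEnd n S i ≤ n - 1 :=
    Nat.find_le (p := fun j => i ≤ j ∧ _) ⟨by omega, Or.inr (by omega)⟩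
  omega

lemma notMem_of_lt_blockEnd (hik : i ≤ k) (hk : k < blockEnd n S i) : k ∉ S :=
  fun hkS => Nat.find_min (p := fun j => i ≤ j ∧ (j ∈ S ∨ n ≤ j + 1)) _ hk ⟨hik, Or.inl hkS⟩

lemma blockEnd_eq (hib : i ≤ b) (hbn : b < n) (hb : b ∈ S ∨ n ≤ b + 1)
    (hS : ∀ k, i ≤ k → k < b → k ∉ S) : blockEnd n S i = b := by
  have hle : blockEnd n S i ≤ b := Nat.find_le ⟨hib, hb⟩
  refine hle.antisymm (not_lt.1 fun hlt => ?_)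
  rcases blockEnd_mem_or (n := n) (S := S) (i := i) with hm | hm
  · exact hS _ le_blockEnd hlt hm
  · omega

lemma blockStart_le : blockStart S i ≤ i := Nat.findGreatest_le i

lemma blockStart_eq_zero_or : blockStart S i = 0 ∨ blockStart S i - 1 ∈ S := by
  rcases Nat.eq_zero_or_pos (blockStart S i) with h | h
  · exact Or.inl h
  · exact Or.inr (Nat.findGreatest_of_ne_zero (P := fun j => 0 < j ∧ j - 1 ∈ S) rfl h.ne').2

lemma notMem_of_blockStart_le (hk : blockStart S i ≤ k) (hki : k < i) : k ∉ S := fun hkS =>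
  Nat.findGreatest_is_greatest (P := fun j => 0 < j ∧ j - 1 ∈ S) (n := i) (k := k + 1)
    (by unfold blockStart at hk; omega) (by omega) ⟨by omega, by simpa using hkS⟩

lemma blockStart_eq (hai : a ≤ i) (ha : a = 0 ∨ a - 1 ∈ S)
    (hS : ∀ k, a ≤ k → k < i → k ∉ S) : blockStart S i = a := by
  have hle : a ≤ blockStart S i := by
    rcases Nat.eq_zero_or_pos a with h0 | h0
    · omega
    · exact Nat.le_findGreatest hai ⟨h0, ha.resolve_left h0.ne'⟩
  refine (hle.antisymm (not_lt.1 fun hlt => ?_)).symm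
  rcases blockStart_eq_zero_or (S := S) (i := i) with h | h
  · omega
  · exact hS _ (by omega) (by have := blockStart_le (S := S) (i := i); omega) h

lemma blockStart_eq_and_blockEnd_eq (hi : i < n) (hj : blockStart S i ≤ j)
    (hj' : j ≤ blockEnd n S i) :
    blockStart S j = blockStart S i ∧ blockEnd n S j = blockEnd n S i := by
  have hS : ∀ k, blockStart S i ≤ k → k < blockEnd n S i → k ∉ S := fun k hk hk' =>
    (lt_or_ge k i).elim (notMem_of_blockStart_le hk) (notMem_of_lt_blockEnd · hk')
  exact ⟨blockStart_eq hj blockStart_eq_zero_or fun k hk hkj => hS k hk (by omega),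
    blockEnd_eq hj' (blockEnd_lt hi) blockEnd_mem_or fun k hk hkj => hS k (by omega) hkj⟩

lemma sameBlock_or_blockEnd_lt (hij : i ≤ j) (hj : j < n) :
    (blockStart S i = blockStart S j ∧ blockEnd n S i = blockEnd n S j) ∨
      blockEnd n S i < blockStart S j := by
  by_cases h : blockStart S j ≤ i
  · exact Or.inl (blockStart_eq_and_blockEnd_eq hj h (hij.trans le_blockEnd))
  · refine Or.inr (not_le.1 fun hle => ?_)
    rcases blockStart_eq_zero_or (S := S) (i := j) with h0 | h0
    · omega
    · exact notMem_of_lt_blockEnd (n := n) (i := i) (by omega) (by omega) h0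

/-- Reversal of each block `[blockStart S i, blockEnd n S i]` of `Fin n`; the blocks end exactly at
the positions in `S` and at `n - 1`. -/
def blockRev (n : ℕ) (S : Finset ℕ) (i : Fin n) : Fin n :=
  ⟨blockStart S i + blockEnd n S i - i, by
    have := blockEnd_lt (S := S) i.isLt
    have := blockStart_le (S := S) (i := (i : ℕ))
    omega⟩

lemma blockRev_val (i : Fin n) : (blockRev n S i : ℕ) = blockStart S i + blockEnd n S i - i := rfl

lemma blockRev_mem_block (i : Fin n) :
    blockStart S i ≤ blockRev n S i ∧ (blockRev n S i : ℕ) ≤ blockEnd n S i := by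
  have := le_blockEnd (n := n) (S := S) (i := (i : ℕ))
  have := blockStart_le (S := S) (i := (i : ℕ))
  rw [blockRev_val]
  omega

lemma blockRev_involutive : Function.Involutive (blockRev n S) := by
  intro i
  have := le_blockEnd (n := n) (S := S) (i := (i : ℕ))
  have := blockStart_le (S := S) (i := (i : ℕ))
  have hm := blockRev_mem_block (S := S) i
  have hc := blockStart_eq_and_blockEnd_eq i.isLt hm.1 hm.2
  ext
  rw [blockRev_val, hc.1, hc.2, blockRev_val]
  omega

def blockRevPerm (n : ℕ) (S : Finset ℕ) : Equiv.Perm (Fin n) :=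
  (blockRev_involutive (n := n) (S := S)).toPerm

lemma blockRevPerm_apply (i : Fin n) : blockRevPerm n S i = blockRev n S i := rfl

lemma pv_blockRevPerm (hi : i < n) :
    pv (blockRevPerm n S) i = blockStart S i + blockEnd n S i - i := by
  rw [pv_of_lt hi]
  rfl

lemma blockRev_lt_or_sameBlock {i j : Fin n} (hij : i < j) :
    (blockEnd n S i < blockStart S j ∧ blockRev n S i < blockRev n S j) ∨
      ((blockStart S i = blockStart S j ∧ blockEnd n S i = blockEnd n S j) ∧
        blockRev n S j < blockRev n S i) := by
  rcases sameBlock_or_blockEnd_lt (S := S) hij.le j.isLt with h | h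
  · refine Or.inr ⟨h, ?_⟩
    rw [Fin.lt_def, blockRev_val, blockRev_val, ← h.1, ← h.2]
    have := le_blockEnd (n := n) (S := S) (i := (j : ℕ))
    have := blockStart_le (S := S) (i := (i : ℕ))
    omega
  · refine Or.inl ⟨h, ?_⟩
    have := (blockRev_mem_block (S := S) i).2
    have := (blockRev_mem_block (S := S) j).1
    rw [Fin.lt_def]
    omega

lemma blockRevPerm_avoids231 : Avoids231 (blockRevPerm n S) := by
  rintro ⟨i, j, k, hij, hjk, hki, hij'⟩
  simp only [blockRevPerm_apply] at hki hij'
  rcases blockRev_lt_or_sameBlock (S := S) hij with h | h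
  · have : blockStart S j ≤ blockStart S k := by
      rcases sameBlock_or_blockEnd_lt (n := n) (S := S) hjk.le k.isLt with hc | hc
      · omega
      · have := blockStart_le (S := S) (i := (j : ℕ))
        have := le_blockEnd (n := n) (S := S) (i := (j : ℕ))
        omega
    have := (blockRev_mem_block (S := S) k).1
    have := (blockRev_mem_block (S := S) i).2
    omega
  · omega

lemma blockRevPerm_avoids312 : Avoids312 (blockRevPerm n S) := by
  rintro ⟨i, j, k, hij, hjk, hjk', hki⟩
  simp only [blockRevPerm_apply] at hjk' hki
  rcases blockRev_lt_or_sameBlock (S := S) hij with h | h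
  · omega
  · rcases blockRev_lt_or_sameBlock (S := S) hjk with hc | hc
    · have := (blockRev_mem_block (S := S) k).1
      have := (blockRev_mem_block (S := S) i).2
      omega
    · omega

lemma ascents_blockRevPerm (hS : S ⊆ Finset.range (n - 1)) : ascents (blockRevPerm n S) = S := by
  ext i
  rw [mem_ascents]
  constructor
  · rintro ⟨hi, hasc⟩
    by_contra hiS
    have hb : i + 1 ≤ blockEnd n S i := by
      rcases (le_blockEnd (n := n) (S := S) (i := i)).lt_or_eq with h | h
      · exact h
      · rcases blockEnd_mem_or (n := n) (S := S) (i := i) with hm | hm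
        · exact absurd (h ▸ hm) hiS
        · omega
    have hc := blockStart_eq_and_blockEnd_eq (S := S) (i := i) (j := i + 1) (by omega)
      (by have := blockStart_le (S := S) (i := i); omega) hb
    rw [pv_blockRevPerm (by omega), pv_blockRevPerm hi, hc.1, hc.2] at hasc
    have := blockStart_le (S := S) (i := i)
    omega
  · intro hiS
    have hi : i + 1 < n := by have := Finset.mem_range.1 (hS hiS); omega
    refine ⟨hi, ?_⟩
    rw [pv_blockRevPerm (by omega), pv_blockRevPerm hi,
      blockEnd_eq le_rfl (by omega) (Or.inl hiS) (by omega),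
      blockStart_eq (i := i + 1) le_rfl (Or.inr (by simpa using hiS)) (by omega)]
    have := blockStart_le (S := S) (i := i)
    have := le_blockEnd (n := n) (S := S) (i := i + 1)
    omega

end BlockReversal

theorem card_avoid_231_312_general (n : ℕ) :
    Nat.card {π : Equiv.Perm (Fin n) // Avoids231 π ∧ Avoids312 π} = 2 ^ (n - 1) := by
  let f : {π : Equiv.Perm (Fin n) // Avoids231 π ∧ Avoids312 π} → (Finset.range (n - 1)).powerset :=
    fun π => ⟨ascents π.1, Finset.mem_powerset.2 (Finset.filter_subset _ _)⟩
  have hf : Function.Bijective f := by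
    refine ⟨fun π σ h => Subtype.ext (eq_of_ascents_eq π.2 σ.2 (congrArg Subtype.val h)), ?_⟩
    rintro ⟨S, hS⟩
    exact ⟨⟨BlockReversal.blockRevPerm n S, BlockReversal.blockRevPerm_avoids231,
      BlockReversal.blockRevPerm_avoids312⟩,
      Subtype.ext (BlockReversal.ascents_blockRevPerm (Finset.mem_powerset.1 hS))⟩
  rw [Nat.card_eq_of_bijective f hf, Nat.card_eq_finsetCard, Finset.card_powerset,
    Finset.card_range]

theorem card_avoid_231_312 (n : ℕ) (hn : 1 ≤ n) :
    Nat.card {π : Equiv.Perm (Fin n) // Avoids231 π ∧ Avoids312 π} = 2 ^ (n - 1) :=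
  card_avoid_231_312_general n
end

section
/- The number of permutations of length n avoiding both patterns 132 and 321 is 1 + n(n-1)/2 for all n ≥ 1. -/
/-!
Let `m` be the position of the value `0` and `s = π 0` (everything 0-based). Avoiding 321 makes `π`
increasing before `m`; avoiding 132 makes it increasing from `m` on and, with `π 0` as the `1` of the
pattern, forbids a later value strictly between `π 0` and an earlier one. As `π i` is the number of
values below `π i`, this gives `π i = i + s` for `i < m`. The class is closed under inversion, so the
same fact for `π⁻¹` puts the values `0, …, s - 1` at the positions `m, …, m + s - 1`, and every later
position is fixed. Hence `π` swaps the adjacent blocks `[0, m)` and `[m, m + s)`: apart from the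
identity there is exactly one such permutation for each `1 ≤ s < m + s ≤ n`.
-/

open Equiv Finset

def swapBlocksFun (m s i : ℕ) : ℕ :=
  if i < m then i + s else if i < m + s then i - m else i

lemma swapBlocksFun_swapBlocksFun (m s i : ℕ) : swapBlocksFun s m (swapBlocksFun m s i) = i := by
  unfold swapBlocksFun
  split_ifs <;> omega

lemma swapBlocksFun_lt {n m s i : ℕ} (h : m + s ≤ n) (hi : i < n) : swapBlocksFun m s i < n := by
  unfold swapBlocksFun
  split_ifs <;> omega

/-- In one-line notation: `s, …, s + m - 1, 0, …, s - 1, m + s, m + s + 1, …`. -/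
def swapBlocks {n : ℕ} (m s : ℕ) (h : m + s ≤ n) : Perm (Fin n) where
  toFun i := ⟨swapBlocksFun m s i, swapBlocksFun_lt h i.2⟩
  invFun i := ⟨swapBlocksFun s m i, swapBlocksFun_lt (by omega) i.2⟩
  left_inv i := Fin.ext (swapBlocksFun_swapBlocksFun m s i)
  right_inv i := Fin.ext (swapBlocksFun_swapBlocksFun s m i)

section swapBlocks

variable {n m s : ℕ} (h : m + s ≤ n)

@[simp]
lemma coe_swapBlocks_apply (i : Fin n) : (swapBlocks m s h i : ℕ) = swapBlocksFun m s i := rfl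

@[simp]
lemma coe_swapBlocks_symm_apply (i : Fin n) : ((swapBlocks m s h).symm i : ℕ) = swapBlocksFun s m i :=
  rfl

lemma avoids132_swapBlocks : Avoids132 (swapBlocks m s h) := by
  rintro ⟨i, j, k, hij, hjk, hik, hkj⟩
  simp only [Fin.lt_def, coe_swapBlocks_apply, swapBlocksFun] at *
  split_ifs at * <;> omega

lemma avoids321_swapBlocks : Avoids321 (swapBlocks m s h) := by
  rintro ⟨i, j, k, hij, hjk, hkj, hji⟩
  simp only [Fin.lt_def, coe_swapBlocks_apply, swapBlocksFun] at *
  split_ifs at * <;> omega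

end swapBlocks

lemma Avoids132.symm {n : ℕ} {π : Perm (Fin n)} (h : Avoids132 π) : Avoids132 π.symm := by
  rintro ⟨i, j, k, hij, hjk, hik, hkj⟩
  exact h ⟨π.symm i, π.symm k, π.symm j, hik, hkj, by simpa using hij, by simpa using hjk⟩

lemma Avoids321.symm {n : ℕ} {π : Perm (Fin n)} (h : Avoids321 π) : Avoids321 π.symm := by
  rintro ⟨i, j, k, hij, hjk, hkj, hji⟩
  exact h ⟨π.symm k, π.symm j, π.symm i, hkj, hji, by simpa using hij, by simpa using hjk⟩

lemma card_filter_apply_lt {n : ℕ} (π : Perm (Fin n)) (v : Fin n) : #{j | π j < v} = v := by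
  rw [card_equiv π (t := {w | w < v}) (by simp), filter_gt_eq_Iio, Fin.card_Iio]

section Structure

variable {n : ℕ} [NeZero n] {π : Perm (Fin n)} {i j : Fin n}

lemma pos_apply_of_ne_symm_zero (hj : j ≠ π.symm 0) : 0 < π j :=
  Fin.pos_iff_ne_zero.2 fun h0 => hj (π.eq_symm_apply.2 h0)

lemma apply_lt_apply_of_lt_symm_zero (h : Avoids321 π) (hij : i < j) (hj : j < π.symm 0) :
    π i < π j := by
  by_contra! hji
  exact h ⟨i, j, _, hij, hj, by simpa using pos_apply_of_ne_symm_zero hj.ne,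
    hji.lt_of_ne (π.injective.ne hij.ne')⟩

lemma apply_lt_apply_of_symm_zero_le (h : Avoids132 π) (hi : π.symm 0 ≤ i) (hij : i < j) :
    π i < π j := by
  have hj : 0 < π j := pos_apply_of_ne_symm_zero (hi.trans_lt hij).ne'
  rcases hi.lt_or_eq with hi | rfl
  · by_contra! hji
    exact h ⟨_, i, j, hi, hij, by simpa using hj, hji.lt_of_ne (π.injective.ne hij.ne')⟩
  · simpa using hj

lemma apply_zero_le_apply_of_lt_symm_zero (h : Avoids321 π) (hi : i < π.symm 0) : π 0 ≤ π i := by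
  rcases (Fin.zero_le i).lt_or_eq with h0 | rfl
  · exact (apply_lt_apply_of_lt_symm_zero h h0 hi).le
  · rfl

lemma coe_apply_of_lt_symm_zero (h132 : Avoids132 π) (h321 : Avoids321 π) (hi : i < π.symm 0) :
    (π i : ℕ) = i + π 0 := by
  have key : ∀ j, π j < π i ↔ j < i ∨ π j < π 0 := by
    refine fun j => ⟨fun hji => ?_, ?_⟩
    · by_contra! hc
      have hij : i < j := hc.1.lt_of_ne (by rintro rfl; exact hji.false)
      rcases (Fin.zero_le i).lt_or_eq with h0 | rfl
      · exact h132 ⟨0, i, j, h0, hij, hc.2.lt_of_ne (π.injective.ne (h0.trans hij).ne), hji⟩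
      · exact hji.not_ge hc.2
    · rintro (hji | hj0)
      · exact apply_lt_apply_of_lt_symm_zero h321 hji hi
      · exact hj0.trans_le (apply_zero_le_apply_of_lt_symm_zero h321 hi)
  have hdisj : Disjoint ({j | j < i} : Finset (Fin n)) ({j | π j < π 0} : Finset (Fin n)) :=
    disjoint_filter.2 fun j _ hj =>
      (apply_zero_le_apply_of_lt_symm_zero h321 (hj.trans hi)).not_gt
  calc (π i : ℕ) = #{j | π j < π i} := (card_filter_apply_lt π (π i)).symm
    _ = #(({j | j < i} : Finset (Fin n)) ∪ ({j | π j < π 0} : Finset (Fin n))) := by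
      rw [← filter_or, filter_congr fun j _ => key j]
    _ = i + π 0 := by
      rw [card_union_of_disjoint hdisj, filter_gt_eq_Iio, Fin.card_Iio, card_filter_apply_lt]

lemma apply_eq_self_of_symm_zero_le (h : Avoids132 π) (hi : π.symm 0 ≤ i) (h0 : π 0 ≤ π i) :
    π i = i := by
  have key : ∀ j, π j < π i ↔ j < i := by
    refine fun j => ⟨fun hji => ?_, fun hji => ?_⟩
    · by_contra! hij
      have hij : i < j := hij.lt_of_ne (by rintro rfl; exact hji.false)
      exact (apply_lt_apply_of_symm_zero_le h hi hij).asymm hji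
    · by_contra! hij
      have hij : π i < π j := hij.lt_of_ne (π.injective.ne hji.ne')
      rcases (Fin.zero_le j).lt_or_eq with hj | rfl
      · exact h ⟨0, j, i, hj, hji, h0.lt_of_ne (π.injective.ne (hj.trans hji).ne), hij⟩
      · exact hij.not_ge h0
  apply Fin.ext
  calc (π i : ℕ) = #{j | π j < π i} := (card_filter_apply_lt π (π i)).symm
    _ = i := by rw [filter_congr fun j _ => key j, filter_gt_eq_Iio, Fin.card_Iio]

lemma coe_symm_apply_of_lt_apply_zero (h132 : Avoids132 π) (h321 : Avoids321 π) {v : Fin n}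
    (hv : v < π 0) : (π.symm v : ℕ) = v + π.symm 0 := by
  simpa using coe_apply_of_lt_symm_zero h132.symm h321.symm (by simpa using hv)

lemma coe_apply_eq_swapBlocksFun (h132 : Avoids132 π) (h321 : Avoids321 π) (i : Fin n) :
    (π i : ℕ) = swapBlocksFun (π.symm 0) (π 0) i := by
  unfold swapBlocksFun
  split_ifs with h1 h2
  · exact coe_apply_of_lt_symm_zero h132 h321 h1
  · obtain ⟨v, hv⟩ : ∃ v : Fin n, (v : ℕ) = i - π.symm 0 := ⟨⟨_, by omega⟩, rfl⟩
    have hvi : π.symm v = i := Fin.ext <| by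
      rw [coe_symm_apply_of_lt_apply_zero h132 h321 (by rw [Fin.lt_def]; omega)]
      omega
    rw [← hv, ← hvi, apply_symm_apply]
  · rw [apply_eq_self_of_symm_zero_le h132 (by rw [Fin.le_def]; omega)]
    by_contra! h0
    have := coe_symm_apply_of_lt_apply_zero h132 h321 h0
    simp only [symm_apply_apply] at this
    omega

lemma symm_zero_add_apply_zero_le (h132 : Avoids132 π) (h321 : Avoids321 π) :
    (π.symm 0 : ℕ) + π 0 ≤ n := by
  rcases Nat.eq_zero_or_pos (π 0 : ℕ) with h0 | h0
  · rw [h0, π.symm_apply_eq.2 (Fin.ext h0).symm]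
    simp
  · obtain ⟨v, hv⟩ : ∃ v : Fin n, (v : ℕ) = π 0 - 1 := ⟨⟨_, by omega⟩, rfl⟩
    have := coe_symm_apply_of_lt_apply_zero h132 h321 (v := v) (by rw [Fin.lt_def]; omega)
    have := (π.symm v).isLt
    omega

lemma eq_swapBlocks (h132 : Avoids132 π) (h321 : Avoids321 π) :
    π = swapBlocks (π.symm 0) (π 0) (symm_zero_add_apply_zero_le h132 h321) :=
  Equiv.ext fun i => Fin.ext (coe_apply_eq_swapBlocksFun h132 h321 i)

end Structure

/-- `⟨t, s⟩` stands for `swapBlocks (t - s) s`; the identity appears only as `⟨0, 0⟩`. -/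
def swapBlocksParams (n : ℕ) : Finset (Σ _ : ℕ, ℕ) :=
  insert ⟨0, 0⟩ ((range (n + 1)).sigma fun t => Ioo 0 t)

lemma mem_swapBlocksParams {n t s : ℕ} :
    ⟨t, s⟩ ∈ swapBlocksParams n ↔ t = 0 ∧ s = 0 ∨ t ≤ n ∧ 0 < s ∧ s < t := by
  simp [swapBlocksParams]

lemma card_swapBlocksParams (n : ℕ) : #(swapBlocksParams n) = 1 + n * (n - 1) / 2 := by
  rw [swapBlocksParams, card_insert_of_notMem (by simp), card_sigma, sum_range_succ']
  simp [sum_range_id, add_comm]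

lemma card_avoids132_avoids321 {n : ℕ} [NeZero n] :
    Nat.card {π : Perm (Fin n) // Avoids132 π ∧ Avoids321 π} = #(swapBlocksParams n) := by
  classical
  rw [Nat.card_eq_fintype_card, Fintype.card_subtype]
  refine card_bij' (fun π _ => ⟨π.symm 0 + π 0, π 0⟩)
    (fun p hp => swapBlocks (p.1 - p.2) p.2 ?_) ?_ ?_ ?_ ?_
  · obtain ⟨t, s⟩ := p
    dsimp only
    rcases mem_swapBlocksParams.1 hp with ⟨rfl, rfl⟩ | ⟨ht, -, hst⟩ <;> omega
  · intro π hπ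
    simp only [mem_filter, mem_univ, true_and] at hπ
    have hle := symm_zero_add_apply_zero_le hπ.1 hπ.2
    have h0 : (π.symm 0 : ℕ) = 0 ↔ (π 0 : ℕ) = 0 := by
      rw [Fin.val_eq_zero_iff, Fin.val_eq_zero_iff]
      exact π.symm_apply_eq.trans eq_comm
    rw [mem_swapBlocksParams]
    omega
  · intro p hp
    simp only [mem_filter, mem_univ, true_and]
    exact ⟨avoids132_swapBlocks _, avoids321_swapBlocks _⟩
  · intro π hπ
    simp only [mem_filter, mem_univ, true_and] at hπ
    simp only [Nat.add_sub_cancel]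
    exact (eq_swapBlocks hπ.1 hπ.2).symm
  · rintro ⟨t, s⟩ hp
    rcases mem_swapBlocksParams.1 hp with ⟨rfl, rfl⟩ | ⟨ht, hs, hst⟩
    · simp [swapBlocksFun]
    · have hm : 0 < t - s := by omega
      simp [swapBlocksFun, hs, hm, hst.le]

theorem card_avoid_132_321 (n : ℕ) (hn : 1 ≤ n) :
    Nat.card {π : Equiv.Perm (Fin n) // Avoids132 π ∧ Avoids321 π} = 1 + n * (n - 1) / 2 := by
  have : NeZero n := ⟨by omega⟩
  rw [card_avoids132_avoids321, card_swapBlocksParams]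
end

section
/- For every n ≥ 0, the quadruples of statistics (asc, des, MNA, MND) and (des, asc, MND, MNA) are equidistributed on S_n(231,312); i.e., there is a bijection on S_n(231,312) that simultaneously exchanges asc with des and MNA with MND. -/
/-!
A permutation avoiding 231 and 312 is layered: for `i < j`, `π i < π j` holds exactly when some
ascent of `π` lies in `[i, j)`. A permutation is determined by its pattern of comparisons, so such
a permutation is determined by its ascent set, and every subset of `[0, n - 2]` occurs as one.
Sending `π` to the layered permutation whose ascent set is the descent set of `π` is therefore an
involution of `S_n(231, 312)` exchanging ascent and descent sets, and `asc`, `des`, `MNA`, `MND`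
depend only on those sets.
-/

open Equiv Finset

theorem Equiv.Perm.eq_of_lt_iff_lt_s6 {n : ℕ} {π σ : Perm (Fin n)}
    (h : ∀ i j, π i < π j ↔ σ i < σ j) : π = σ := by
  have hmono : Monotone (σ * π⁻¹) := fun a b hab =>
    not_lt.1 ((h (π⁻¹ b) (π⁻¹ a)).not.1 (by simpa using hab.not_gt))
  exact ((Perm.monotone_iff _).1 hmono |> mul_inv_eq_one.1).symm

theorem exists_perm_lt_iff_of_injective {α : Type*} [LinearOrder α] {n : ℕ} {f : Fin n → α}
    (hf : Function.Injective f) : ∃ π : Perm (Fin n), ∀ i j, π i < π j ↔ f i < f j := by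
  have hsort : StrictMono (f ∘ Tuple.sort f) :=
    (Tuple.monotone_sort f).strictMono_of_injective (hf.comp (Tuple.sort f).injective)
  refine ⟨(Tuple.sort f)⁻¹, fun i j => ?_⟩
  simpa using (hsort.lt_iff_lt (a := (Tuple.sort f)⁻¹ i) (b := (Tuple.sort f)⁻¹ j)).symm

section Layered

variable {n : ℕ} {π σ : Perm (Fin n)}

theorem mem_ascents_iff {p : ℕ} :
    p ∈ ascents π ↔ ∃ hp : p + 1 < n, π ⟨p, by omega⟩ < π ⟨p + 1, hp⟩ := by
  rw [ascents, Finset.mem_filter, Finset.mem_range]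
  unfold pv
  constructor <;> rintro ⟨hp, hlt⟩ <;>
    exact ⟨by omega, by simpa [show p < n by omega, show p + 1 < n by omega] using hlt⟩

theorem mem_descents_iff {p : ℕ} :
    p ∈ descents π ↔ ∃ hp : p + 1 < n, π ⟨p + 1, hp⟩ < π ⟨p, by omega⟩ := by
  rw [descents, Finset.mem_filter, Finset.mem_range]
  unfold pv
  constructor <;> rintro ⟨hp, hlt⟩ <;>
    exact ⟨by omega, by simpa [show p < n by omega, show p + 1 < n by omega] using hlt⟩

theorem descents_eq_sdiff (π : Perm (Fin n)) : descents π = range (n - 1) \ ascents π := by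
  ext p
  rw [mem_descents_iff, mem_sdiff, mem_ascents_iff, mem_range]
  constructor
  · rintro ⟨hp, hlt⟩
    exact ⟨by omega, fun ⟨_, hgt⟩ => lt_asymm hlt hgt⟩
  · rintro ⟨hp, hasc⟩
    have hne : π ⟨p + 1, by omega⟩ ≠ π ⟨p, by omega⟩ := π.injective.ne (by simp)
    exact ⟨by omega, lt_of_le_of_ne (not_lt.1 fun hlt => hasc ⟨by omega, hlt⟩) hne⟩

/-- `π` is the layered permutation whose runs end at the positions in `S`. -/
def IsLayered (S : Finset ℕ) (π : Perm (Fin n)) : Prop :=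
  ∀ i j : Fin n, i < j → (π i < π j ↔ ∃ p ∈ S, (i : ℕ) ≤ p ∧ p < j)

variable {S : Finset ℕ}

theorem IsLayered.unique (hπ : IsLayered S π) (hσ : IsLayered S σ) : π = σ := by
  refine Perm.eq_of_lt_iff_lt_s6 fun i j => ?_
  rcases lt_trichotomy i j with hij | rfl | hij
  · rw [hπ i j hij, hσ i j hij]
  · simp
  · have hπne := π.injective.ne hij.ne'
    have hσne := σ.injective.ne hij.ne'
    rw [← not_iff_not, not_lt, not_lt, le_iff_lt_or_eq, le_iff_lt_or_eq, hπ j i hij,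
      hσ j i hij]
    simp [hπne.symm, hσne.symm]

theorem IsLayered.ascents_eq (h : IsLayered S π) (hS : S ⊆ range (n - 1)) : ascents π = S := by
  ext p
  by_cases hp : p + 1 < n
  · rw [mem_ascents_iff, exists_prop_of_true hp, h _ _ (Fin.mk_lt_mk.2 (lt_add_one p))]
    constructor
    · rintro ⟨q, hq, hpq, hqp⟩
      obtain rfl : p = q := by simp only at hpq hqp; omega
      exact hq
    · exact fun hpS => ⟨p, hpS, le_rfl, lt_add_one p⟩
  · have hpS : p ∉ S := fun hpS => hp (by have := mem_range.1 (hS hpS); omega)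
    simpa [mem_ascents_iff, hp] using hpS

theorem IsLayered.avoids231 (h : IsLayered S π) : Avoids231 π := by
  rintro ⟨i, j, k, hij, hjk, hki, hij'⟩
  obtain ⟨p, hp, hip, hpj⟩ := (h i j hij).1 hij'
  exact lt_asymm hki ((h i k (hij.trans hjk)).2 ⟨p, hp, hip, hpj.trans hjk⟩)

theorem IsLayered.avoids312 (h : IsLayered S π) : Avoids312 π := by
  rintro ⟨i, j, k, hij, hjk, hjk', hki⟩
  obtain ⟨p, hp, hjp, hpk⟩ := (h j k hjk).1 hjk'
  exact lt_asymm hki ((h i k (hij.trans hjk)).2 ⟨p, hp, by omega, hpk⟩)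

theorem card_filter_lt_lt_iff {i j : ℕ} (hij : i < j) :
    (S.filter (· < i)).card < (S.filter (· < j)).card ↔ ∃ p ∈ S, i ≤ p ∧ p < j := by
  have hsub : S.filter (· < i) ⊆ S.filter (· < j) := fun p hp => by
    rw [mem_filter] at hp ⊢
    exact ⟨hp.1, hp.2.trans hij⟩
  constructor
  · intro hlt
    by_contra hno
    push Not at hno
    refine hlt.ne (congrArg card (filter_congr fun p hp => ⟨fun hpi => hpi.trans hij, ?_⟩))
    have := hno p hp
    omega
  · rintro ⟨p, hp, hip, hpj⟩
    exact card_lt_card ((ssubset_iff_of_subset hsub).2 ⟨p, by simp [hp, hpj], by simp [hip]⟩)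

/-- Sorting positions by this key lists the runs in order, each run from right to left. -/
def layerKey (S : Finset ℕ) (i : Fin n) : ℕ ×ₗ (Fin n)ᵒᵈ :=
  toLex ((S.filter (· < (i : ℕ))).card, OrderDual.toDual i)

theorem layerKey_injective : Function.Injective (layerKey (n := n) S) :=
  fun i j h => by simpa [layerKey] using congrArg (fun x => (ofLex x).2) h

theorem layerKey_lt_iff {i j : Fin n} (hij : i < j) :
    layerKey S i < layerKey S j ↔ ∃ p ∈ S, (i : ℕ) ≤ p ∧ p < j := by
  rw [layerKey, layerKey, Prod.Lex.toLex_lt_toLex, ← card_filter_lt_lt_iff hij]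
  simp [hij.not_gt]

theorem exists_isLayered (S : Finset ℕ) : ∃ π : Perm (Fin n), IsLayered S π := by
  obtain ⟨π, hπ⟩ := exists_perm_lt_iff_of_injective (layerKey_injective (S := S))
  exact ⟨π, fun i j hij => (hπ i j).trans (layerKey_lt_iff hij)⟩

theorem Avoids231.lt_of_ascent (h : Avoids231 π) {p : ℕ} (hp : p + 1 < n)
    (hasc : π ⟨p, by omega⟩ < π ⟨p + 1, hp⟩) {k : Fin n} (hk : p < k) : π ⟨p, by omega⟩ < π k := by
  rcases (show p + 1 = k ∨ p + 1 < k by omega) with hk' | hk'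
  · rwa [show k = ⟨p + 1, hp⟩ from Fin.ext hk'.symm]
  · by_contra hkp
    have hne : π k ≠ π ⟨p, by omega⟩ := π.injective.ne (Fin.ne_of_val_ne (by simp; omega))
    exact h ⟨⟨p, by omega⟩, ⟨p + 1, hp⟩, k, Fin.mk_lt_mk.2 (lt_add_one p), hk',
      lt_of_le_of_ne (not_lt.1 hkp) hne, hasc⟩

theorem lt_of_mem_ascents_between (h231 : Avoids231 π) (h312 : Avoids312 π) {p : ℕ}
    (hp : p ∈ ascents π) {i j : Fin n} (hip : (i : ℕ) ≤ p) (hpj : p < j) : π i < π j := by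
  obtain ⟨hp1, hasc⟩ := mem_ascents_iff.1 hp
  have hpj' := h231.lt_of_ascent hp1 hasc hpj
  rcases hip.eq_or_lt with rfl | hip
  · simpa using hpj'
  · by_contra hji
    have hne : π j ≠ π i := π.injective.ne (Fin.ne_of_val_ne (by omega))
    exact h312 ⟨i, ⟨p, by omega⟩, j, hip, hpj, hpj', lt_of_le_of_ne (not_lt.1 hji) hne⟩

theorem le_of_forall_notMem_ascents {i j : Fin n} (hij : i ≤ j)
    (h : ∀ p, (i : ℕ) ≤ p → p < j → p ∉ ascents π) : π j ≤ π i := by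
  suffices ∀ m, (i : ℕ) ≤ m → ∀ hm : m < n, (∀ p, (i : ℕ) ≤ p → p < m → p ∉ ascents π) →
      π ⟨m, hm⟩ ≤ π i from this j hij j.2 h
  intro m him
  induction m, him using Nat.le_induction with
  | base => simp
  | succ m him ih =>
    intro hm hno
    calc π ⟨m + 1, hm⟩ ≤ π ⟨m, by omega⟩ :=
          not_lt.1 fun hlt => hno m him (lt_add_one m) (mem_ascents_iff.2 ⟨hm, hlt⟩)
      _ ≤ π i := ih _ fun p h1 h2 => hno p h1 (by omega)

theorem isLayered_ascents (h231 : Avoids231 π) (h312 : Avoids312 π) :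
    IsLayered (ascents π) π := fun _ _ hij =>
  ⟨fun hlt => by_contra fun hno =>
      (le_of_forall_notMem_ascents hij.le fun p h1 h2 hp => hno ⟨p, hp, h1, h2⟩).not_gt hlt,
    fun ⟨_, hp, hip, hpj⟩ => lt_of_mem_ascents_between h231 h312 hp hip hpj⟩

end Layered

theorem exists_equiv_swap_ascents_descents (n : ℕ) :
    ∃ e : {π : Perm (Fin n) // Avoids231 π ∧ Avoids312 π} ≃
          {π : Perm (Fin n) // Avoids231 π ∧ Avoids312 π},
      ∀ π, ascents (e π).1 = descents π.1 ∧ descents (e π).1 = ascents π.1 := by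
  choose L hL using exists_isLayered (n := n)
  let f (π : {π : Perm (Fin n) // Avoids231 π ∧ Avoids312 π}) :
      {π : Perm (Fin n) // Avoids231 π ∧ Avoids312 π} :=
    ⟨L (descents π.1), (hL _).avoids231, (hL _).avoids312⟩
  have hasc (π) : ascents (f π).1 = descents π.1 := (hL _).ascents_eq (filter_subset _ _)
  have hdes (π) : descents (f π).1 = ascents π.1 := by
    rw [descents_eq_sdiff, hasc, descents_eq_sdiff]
    exact Finset.sdiff_sdiff_eq_self (filter_subset _ _)
  have hf : Function.Involutive f := fun π => Subtype.ext <| by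
    change L (descents (f π).1) = π.1
    rw [hdes]
    exact (hL _).unique (isLayered_ascents π.2.1 π.2.2)
  exact ⟨hf.toPerm f, fun π => ⟨hasc π, hdes π⟩⟩

theorem equidistribution_231_312 (n : ℕ) :
    ∃ e : {π : Equiv.Perm (Fin n) // Avoids231 π ∧ Avoids312 π} ≃
          {π : Equiv.Perm (Fin n) // Avoids231 π ∧ Avoids312 π},
      ∀ π, asc (e π).1 = des π.1 ∧ des (e π).1 = asc π.1 ∧
        MNA (e π).1 = MND π.1 ∧ MND (e π).1 = MNA π.1 := by
  obtain ⟨e, he⟩ := exists_equiv_swap_ascents_descents n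
  refine ⟨e, fun π => ?_⟩
  obtain ⟨hasc, hdes⟩ := he π
  simp only [asc, des, MNA, MND, hasc, hdes, and_self]
end

section
/- The number of permutations in S_n(213,312) with exactly k left-to-right maxima equals the binomial coefficient C(n-1, k-1), for all n ≥ 1 and 1 ≤ k ≤ n. -/
open Finset

section Unimodal

variable {n : ℕ}

lemma lt_last_of_ne_symm_last (π : Equiv.Perm (Fin (n + 1))) {i : Fin (n + 1)}
    (hi : i ≠ π.symm (Fin.last n)) : π i < Fin.last n :=
  Fin.lt_last_iff_ne_last.2 fun h => hi (π.eq_symm_apply.2 h)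

lemma Avoids213.strictMonoOn_Iic {π : Equiv.Perm (Fin (n + 1))} (h : Avoids213 π) :
    StrictMonoOn π (Set.Iic (π.symm (Fin.last n))) := by
  intro i _ j (hj : j ≤ _) hij
  rcases hj.lt_or_eq with hj | rfl
  · refine lt_of_not_ge fun hle => h ⟨i, j, _, hij, hj, ?_, ?_⟩
    · exact hle.lt_of_ne (π.injective.ne hij.ne')
    · simpa using lt_last_of_ne_symm_last π (hij.trans hj).ne
  · simpa using lt_last_of_ne_symm_last π hij.ne

lemma Avoids312.strictAntiOn_Ici {π : Equiv.Perm (Fin (n + 1))} (h : Avoids312 π) :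
    StrictAntiOn π (Set.Ici (π.symm (Fin.last n))) := by
  intro i (hi : _ ≤ i) j _ hij
  rcases hi.lt_or_eq with hi | rfl
  · refine lt_of_not_ge fun hle => h ⟨_, i, j, hi, hij, ?_, ?_⟩
    · exact hle.lt_of_ne (π.injective.ne hij.ne)
    · simpa using lt_last_of_ne_symm_last π (hi.trans hij).ne'
  · simpa using lt_last_of_ne_symm_last π hij.ne'

lemma Avoids213.lrmax_eq {π : Equiv.Perm (Fin (n + 1))} (h : Avoids213 π) :
    lrmax π = π.symm (Fin.last n) + 1 := by
  have isLRMax_iff (i : Fin (n + 1)) : IsLRMax π i ↔ i ≤ π.symm (Fin.last n) := by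
    refine ⟨fun hi => le_of_not_gt fun hlt => ?_, fun hi j hj => Avoids213.strictMonoOn_Iic h
      (hj.le.trans hi) hi hj⟩
    simpa using (hi _ hlt).trans_le (Fin.le_last _)
  rw [lrmax, Nat.card_congr (Equiv.subtypeEquivRight isLRMax_iff), Nat.card_eq_fintype_card,
    Fintype.card_subtype, filter_ge_eq_Iic, Fin.card_Iic]

def valuesBeforeMax (π : Equiv.Perm (Fin (n + 1))) : Finset (Fin (n + 1)) :=
  (Iio (π.symm (Fin.last n))).image π

lemma mem_valuesBeforeMax {π : Equiv.Perm (Fin (n + 1))} {v : Fin (n + 1)} :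
    v ∈ valuesBeforeMax π ↔ π.symm v < π.symm (Fin.last n) := by
  simp [valuesBeforeMax, ← π.eq_symm_apply]

lemma last_notMem_valuesBeforeMax (π : Equiv.Perm (Fin (n + 1))) :
    Fin.last n ∉ valuesBeforeMax π := by
  simp [mem_valuesBeforeMax]

lemma card_valuesBeforeMax (π : Equiv.Perm (Fin (n + 1))) :
    #(valuesBeforeMax π) = π.symm (Fin.last n) := by
  rw [valuesBeforeMax, card_image_of_injective _ π.injective, Fin.card_Iio]

lemma Avoids213.lrmax_eq_card_valuesBeforeMax {π : Equiv.Perm (Fin (n + 1))} (h : Avoids213 π) :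
    lrmax π = #(valuesBeforeMax π) + 1 := by
  rw [Avoids213.lrmax_eq h, card_valuesBeforeMax]

/-- Sorting the values by this key lists `L` increasingly, then the other values decreasingly. -/
def unimodalKey (L : Finset (Fin (n + 1))) (v : Fin (n + 1)) : ℕ :=
  if v ∈ L then v else 2 * n + 1 - v

lemma unimodalKey_injective (L : Finset (Fin (n + 1))) : Function.Injective (unimodalKey L) := by
  intro u v huv
  have := u.is_le; have := v.is_le
  unfold unimodalKey at huv
  split_ifs at huv <;> omega

lemma unimodalKey_lt_iff_of_notMem {L : Finset (Fin (n + 1))} {v : Fin (n + 1)} (hv : v ∉ L)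
    (w : Fin (n + 1)) : unimodalKey L v < unimodalKey L w ↔ w ∉ L ∧ w < v := by
  have := v.is_le; have := w.is_le
  simp only [unimodalKey, hv, if_false, Fin.lt_def]
  split_ifs <;> simp_all <;> omega

def unimodalPerm (L : Finset (Fin (n + 1))) : Equiv.Perm (Fin (n + 1)) :=
  Tuple.sort (unimodalKey L)

lemma strictMono_unimodalKey_comp_unimodalPerm (L : Finset (Fin (n + 1))) :
    StrictMono (unimodalKey L ∘ unimodalPerm L) :=
  (Tuple.monotone_sort _).strictMono_of_injective
    ((unimodalKey_injective L).comp (Equiv.injective _))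

lemma avoids_of_strictMono_unimodalKey_comp {L : Finset (Fin (n + 1))}
    {π : Equiv.Perm (Fin (n + 1))} (h : StrictMono (unimodalKey L ∘ π)) :
    Avoids213 π ∧ Avoids312 π := by
  have no_valley {i j l : Fin (n + 1)} (hij : i < j) (hjl : j < l) (hji : π j < π i)
      (hjl' : π j < π l) : False := by
    -- `π j` is smaller than `π i` but comes later, so it cannot be sorted among `L`
    have hj : π j ∉ L := fun hj => by
      have hkey := h hij
      have := (π i).is_le; have := (π j).is_le
      rw [Fin.lt_def] at hji
      simp only [Function.comp, unimodalKey, hj, if_true] at hkey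
      split_ifs at hkey <;> omega
    exact ((unimodalKey_lt_iff_of_notMem hj _).1 (h hjl)).2.asymm hjl'
  exact ⟨fun ⟨i, j, l, hij, hjl, hji, hil⟩ => no_valley hij hjl hji (hji.trans hil),
    fun ⟨i, j, l, hij, hjl, hjl', hli⟩ => no_valley hij hjl (hjl'.trans hli) hjl'⟩

lemma strictMono_unimodalKey_valuesBeforeMax_comp {π : Equiv.Perm (Fin (n + 1))}
    (h213 : Avoids213 π) (h312 : Avoids312 π) :
    StrictMono (unimodalKey (valuesBeforeMax π) ∘ π) := by
  intro i j hij
  have mem_iff (i : Fin (n + 1)) : π i ∈ valuesBeforeMax π ↔ i < π.symm (Fin.last n) := by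
    rw [mem_valuesBeforeMax, π.symm_apply_apply]
  have := (π i).is_le; have := (π j).is_le
  simp only [Function.comp, unimodalKey, mem_iff]
  split_ifs with hi hj hj
  · exact Avoids213.strictMonoOn_Iic h213 hi.le hj.le hij
  · omega
  · exact absurd (hij.trans hj) hi
  · have := Avoids312.strictAntiOn_Ici h312 (not_lt.1 hi) (not_lt.1 hj) hij
    simp only [Fin.lt_def] at this
    omega

lemma unimodalPerm_valuesBeforeMax {π : Equiv.Perm (Fin (n + 1))} (h213 : Avoids213 π)
    (h312 : Avoids312 π) : unimodalPerm (valuesBeforeMax π) = π := by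
  have hmono := strictMono_unimodalKey_valuesBeforeMax_comp h213 h312
  exact (Tuple.eq_sort_iff.2
    ⟨hmono.monotone, fun i j hij heq => absurd heq (hmono hij).ne⟩).symm

lemma valuesBeforeMax_unimodalPerm {L : Finset (Fin (n + 1))} (hL : Fin.last n ∉ L) :
    valuesBeforeMax (unimodalPerm L) = L := by
  ext v
  rw [mem_valuesBeforeMax, ← (strictMono_unimodalKey_comp_unimodalPerm L).lt_iff_lt]
  simp only [Function.comp, Equiv.apply_symm_apply]
  by_cases hv : v ∈ L
  · have := v.is_le
    have : v ≠ Fin.last n := by rintro rfl; exact hL hv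
    simp only [unimodalKey, hv, hL, if_true, if_false, iff_true, Fin.val_last]
    omega
  · simp [unimodalKey_lt_iff_of_notMem hv, hv, Fin.le_last]

end Unimodal

theorem card_avoid_213_312_with_lrmax (n k : ℕ) (hk1 : 1 ≤ k) (hk2 : k ≤ n) :
    Nat.card {π : Equiv.Perm (Fin n) // (Avoids213 π ∧ Avoids312 π) ∧ lrmax π = k} =
      Nat.choose (n - 1) (k - 1) := by
  classical
  obtain ⟨n, rfl⟩ : ∃ m, n = m + 1 := ⟨n - 1, by omega⟩
  have card_target : #((univ.erase (Fin.last n)).powersetCard (k - 1)) = n.choose (k - 1) := by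
    simp [card_powersetCard]
  rw [Nat.card_eq_fintype_card, Fintype.card_subtype, add_tsub_cancel_right, ← card_target]
  refine card_bij' (fun π _ => valuesBeforeMax π) (fun L _ => unimodalPerm L) ?_ ?_ ?_ ?_ <;>
    simp only [mem_filter, mem_univ, true_and, mem_powersetCard, subset_erase, subset_univ]
  · rintro π ⟨⟨h213, -⟩, rfl⟩
    rw [Avoids213.lrmax_eq_card_valuesBeforeMax h213, add_tsub_cancel_right]
    exact ⟨last_notMem_valuesBeforeMax π, rfl⟩
  · rintro L ⟨hL, hcard⟩
    have havoid :=
      avoids_of_strictMono_unimodalKey_comp (strictMono_unimodalKey_comp_unimodalPerm L)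
    refine ⟨havoid, ?_⟩
    rw [Avoids213.lrmax_eq_card_valuesBeforeMax havoid.1, valuesBeforeMax_unimodalPerm hL]
    omega
  · rintro π ⟨⟨h213, h312⟩, -⟩
    exact unimodalPerm_valuesBeforeMax h213 h312
  · rintro L ⟨hL, -⟩
    exact valuesBeforeMax_unimodalPerm hL
end

section
/- For n ≥ 2, the number of permutations π ∈ S_n(132,321) with des(π)=0 is 1 (the identity), the number with des(π)=1 is C(n,2), and there are none with des(π) ≥ 2. -/
namespace Aux

def fsig (a m i : ℕ) : ℕ :=
  if i + a ≤ m then i + a else if i ≤ m then i + a - (m + 1) else i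

def gsig (a m v : ℕ) : ℕ :=
  if v < a then v + (m + 1 - a) else if v ≤ m then v - a else v

lemma fsig_lt {a m i n : ℕ} (ham : a ≤ m) (hm : m < n) (hi : i < n) : fsig a m i < n := by
  unfold fsig; split_ifs <;> omega

lemma gsig_lt {a m v n : ℕ} (hm : m < n) (hv : v < n) : gsig a m v < n := by
  unfold gsig; split_ifs <;> omega

lemma gf {a m : ℕ} (ha : 1 ≤ a) (ham : a ≤ m) (i : ℕ) : gsig a m (fsig a m i) = i := by
  unfold fsig gsig; split_ifs <;> omega

lemma fg {a m : ℕ} (ha : 1 ≤ a) (ham : a ≤ m) (v : ℕ) : fsig a m (gsig a m v) = v := by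
  unfold fsig gsig; split_ifs <;> omega

def sig (n a m : ℕ) (ha : 1 ≤ a) (ham : a ≤ m) (hm : m < n) : Equiv.Perm (Fin n) where
  toFun i := ⟨fsig a m i, fsig_lt ham hm i.isLt⟩
  invFun v := ⟨gsig a m v, gsig_lt hm v.isLt⟩
  left_inv i := Fin.ext (gf ha ham i)
  right_inv v := Fin.ext (fg ha ham v)

lemma pv_eq {n : ℕ} (π : Equiv.Perm (Fin n)) {i : ℕ} (hi : i < n) :
    pv π i = (π ⟨i, hi⟩ : ℕ) := dif_pos hi

lemma pv_sig {n a m : ℕ} (ha : 1 ≤ a) (ham : a ≤ m) (hm : m < n) {i : ℕ} (hi : i < n) :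
    pv (sig n a m ha ham hm) i = fsig a m i := pv_eq _ hi

end Aux

namespace Aux

lemma descents_sig {n a m : ℕ} (ha : 1 ≤ a) (ham : a ≤ m) (hm : m < n) :
    descents (sig n a m ha ham hm) = {m - a} := by
  ext i
  simp only [descents, Finset.mem_filter, Finset.mem_range, Finset.mem_singleton]
  constructor
  · rintro ⟨h1, h2⟩
    rw [pv_sig ha ham hm (by omega), pv_sig ha ham hm (by omega)] at h2
    unfold fsig at h2; split_ifs at h2 <;> omega
  · rintro rfl
    refine ⟨by omega, ?_⟩
    rw [pv_sig ha ham hm (by omega), pv_sig ha ham hm (by omega)]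
    unfold fsig; split_ifs <;> omega

lemma avoids132_sig {n a m : ℕ} (ha : 1 ≤ a) (ham : a ≤ m) (hm : m < n) :
    ¬ ∃ i j k : Fin n, i < j ∧ j < k ∧
      sig n a m ha ham hm i < sig n a m ha ham hm k ∧
      sig n a m ha ham hm k < sig n a m ha ham hm j := by
  rintro ⟨i, j, k, hij, hjk, h1, h2⟩
  rw [Fin.lt_def] at hij hjk h1 h2
  have e1 : ((sig n a m ha ham hm) i : ℕ) = fsig a m i := rfl
  have e2 : ((sig n a m ha ham hm) j : ℕ) = fsig a m j := rfl
  have e3 : ((sig n a m ha ham hm) k : ℕ) = fsig a m k := rfl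
  rw [e1, e3] at h1; rw [e3, e2] at h2
  unfold fsig at h1 h2; split_ifs at h1 h2 <;> omega

lemma avoids321_sig {n a m : ℕ} (ha : 1 ≤ a) (ham : a ≤ m) (hm : m < n) :
    ¬ ∃ i j k : Fin n, i < j ∧ j < k ∧
      sig n a m ha ham hm k < sig n a m ha ham hm j ∧
      sig n a m ha ham hm j < sig n a m ha ham hm i := by
  rintro ⟨i, j, k, hij, hjk, h1, h2⟩
  rw [Fin.lt_def] at hij hjk h1 h2
  have e1 : ((sig n a m ha ham hm) i : ℕ) = fsig a m i := rfl
  have e2 : ((sig n a m ha ham hm) j : ℕ) = fsig a m j := rfl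
  have e3 : ((sig n a m ha ham hm) k : ℕ) = fsig a m k := rfl
  rw [e3, e2] at h1; rw [e2, e1] at h2
  unfold fsig at h1 h2; split_ifs at h1 h2 <;> omega

end Aux

namespace Aux

variable {n : ℕ} (π : Equiv.Perm (Fin n))

lemma pv_lt_n {i : ℕ} (hi : i < n) : pv π i < n := by
  rw [pv_eq π hi]; exact (π ⟨i, hi⟩).isLt

lemma pv_inj {i j : ℕ} (hi : i < n) (hj : j < n) (h : pv π i = pv π j) : i = j := by
  rw [pv_eq π hi, pv_eq π hj] at h
  have := π.injective (Fin.ext h)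
  exact congrArg Fin.val this

lemma exists_pv {v : ℕ} (hv : v < n) : ∃ k, k < n ∧ pv π k = v := by
  refine ⟨(π.symm ⟨v, hv⟩ : Fin n).val, (π.symm ⟨v, hv⟩).isLt, ?_⟩
  rw [pv_eq π (π.symm ⟨v, hv⟩).isLt]
  simp

lemma chain {i j : ℕ} (hj : j < n) (hij : i < j)
    (h : ∀ l, i ≤ l → l < j → pv π l < pv π (l + 1)) : pv π i < pv π j := by
  induction j with
  | zero => omega
  | succ j ih =>
    rcases Nat.lt_or_ge i j with hij' | hij'
    · exact lt_trans (ih (by omega) hij' (fun l hl hl' => h l hl (by omega)))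
        (h j (by omega) (by omega))
    · have : i = j := by omega
      subst this
      exact h i le_rfl (by omega)

end Aux

namespace Aux

variable {n : ℕ}

lemma pv_lt_pv_iff (π : Equiv.Perm (Fin n)) {i j : ℕ} (hi : i < n) (hj : j < n) :
    π ⟨i, hi⟩ < π ⟨j, hj⟩ ↔ pv π i < pv π j := by
  rw [Fin.lt_def, pv_eq π hi, pv_eq π hj]

lemma two_descents (π : Equiv.Perm (Fin n))
    (h132 : ¬ ∃ i j k : Fin n, i < j ∧ j < k ∧ π i < π k ∧ π k < π j)
    (h321 : ¬ ∃ i j k : Fin n, i < j ∧ j < k ∧ π k < π j ∧ π j < π i) :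
    ∀ x y : ℕ, x < y → x < n - 1 → y < n - 1 →
      pv π (x+1) < pv π x → pv π (y+1) < pv π y → False := by
  intro x y hxy hx hy hdx hdy
  have hxn : x < n := by omega
  have hx1n : x + 1 < n := by omega
  have hyn : y < n := by omega
  have hy1n : y + 1 < n := by omega
  rcases Nat.lt_or_ge (pv π x) (pv π (y+1)) with hA | hB
  · exact h132 ⟨⟨x, hxn⟩, ⟨y, hyn⟩, ⟨y+1, hy1n⟩,
      by simpa [Fin.lt_def] using (by omega : x < y),
      by simp [Fin.lt_def],
      (pv_lt_pv_iff π hxn hy1n).mpr hA,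
      (pv_lt_pv_iff π hy1n hyn).mpr hdy⟩
  · have hne' : pv π (y+1) ≠ pv π x := fun h => by
      have := pv_inj π hy1n hxn h; omega
    have hB' : pv π (y+1) < pv π x := by omega
    rcases Nat.lt_or_ge (pv π (y+1)) (pv π (x+1)) with hB1 | hB2
    · exact h321 ⟨⟨x, hxn⟩, ⟨x+1, hx1n⟩, ⟨y+1, hy1n⟩,
        by simp [Fin.lt_def],
        by simpa [Fin.lt_def] using (by omega : x + 1 < y + 1),
        (pv_lt_pv_iff π hy1n hx1n).mpr hB1,
        (pv_lt_pv_iff π hx1n hxn).mpr hdx⟩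
    · have hne2 : pv π (x+1) ≠ pv π (y+1) := fun h => by
        have := pv_inj π hx1n hy1n h; omega
      have hB2' : pv π (x+1) < pv π (y+1) := by omega
      have hxy1 : x + 1 < y := by
        rcases Nat.lt_or_ge (x+1) y with h' | h'
        · exact h'
        · exfalso; have : x + 1 = y := by omega
          subst this; omega
      exact h132 ⟨⟨x+1, hx1n⟩, ⟨y, hyn⟩, ⟨y+1, hy1n⟩,
        by simpa [Fin.lt_def] using hxy1,
        by simp [Fin.lt_def],
        (pv_lt_pv_iff π hx1n hy1n).mpr hB2',
        (pv_lt_pv_iff π hy1n hyn).mpr hdy⟩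

lemma des_le_one (π : Equiv.Perm (Fin n))
    (h132 : ¬ ∃ i j k : Fin n, i < j ∧ j < k ∧ π i < π k ∧ π k < π j)
    (h321 : ¬ ∃ i j k : Fin n, i < j ∧ j < k ∧ π k < π j ∧ π j < π i) :
    (descents π).card ≤ 1 := by
  by_contra hc
  obtain ⟨i, hi, j, hj, hne⟩ :=
    Finset.one_lt_card.mp (show 1 < (descents π).card by omega)
  simp only [descents, Finset.mem_filter, Finset.mem_range] at hi hj
  rcases Nat.lt_or_ge i j with hlt | hge
  · exact two_descents π h132 h321 i j hlt hi.1 hj.1 hi.2 hj.2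
  · exact two_descents π h132 h321 j i (by omega) hj.1 hi.1 hj.2 hi.2

end Aux

namespace Aux

variable {n : ℕ}

lemma asc_of_not_descent (π : Equiv.Perm (Fin n)) {l : ℕ} (hl : l < n - 1)
    (h : ¬ pv π (l + 1) < pv π l) : pv π l < pv π (l + 1) := by
  have hne : pv π l ≠ pv π (l + 1) := fun hh => by
    have := pv_inj π (by omega) (by omega) hh; omega
  omega

lemma eq_id_of_no_descent (π : Equiv.Perm (Fin n)) (h : descents π = ∅) : π = 1 := by
  have asc : ∀ l, l < n - 1 → pv π l < pv π (l + 1) := by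
    intro l hl
    refine asc_of_not_descent π hl (fun hc => ?_)
    have : l ∈ descents π := by
      simp only [descents, Finset.mem_filter, Finset.mem_range]; exact ⟨hl, hc⟩
    simp [h] at this
  have key : ∀ i, i < n → pv π i = i := by
    intro i
    induction i using Nat.strong_induction_on with
    | _ i ih =>
      intro hi
      have hge : i ≤ pv π i := by
        rcases Nat.eq_zero_or_pos i with rfl | hpos
        · omega
        · have h1 : pv π (i - 1) = i - 1 := ih (i - 1) (by omega) (by omega)
          have h2 : pv π (i - 1) < pv π i := by
            have := asc (i - 1) (by omega)
            have e : i - 1 + 1 = i := by omega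
            rwa [e] at this
          omega
      rcases Nat.lt_or_ge i (pv π i) with hgt | hle
      · exfalso
        obtain ⟨k, hk, hpk⟩ := exists_pv π (show i < n from hi)
        rcases Nat.lt_trichotomy k i with h' | h' | h'
        · have := ih k h' (by omega); omega
        · subst h'; omega
        · have : pv π i < pv π k := chain π hk h' (fun l hl hl' => asc l (by omega))
          omega
      · omega
  ext i
  have := key i.val i.isLt
  rw [pv_eq π i.isLt] at this
  simpa using this

end Aux

namespace Aux

variable {n : ℕ}

lemma classify (π : Equiv.Perm (Fin n))
    (h132 : ¬ ∃ i j k : Fin n, i < j ∧ j < k ∧ π i < π k ∧ π k < π j)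
    (hdes : (descents π).card = 1) :
    ∃ (a m : ℕ) (ha : 1 ≤ a) (ham : a ≤ m) (hm : m < n), π = sig n a m ha ham hm := by
  obtain ⟨d, hd⟩ := Finset.card_eq_one.mp hdes
  have hdmem : d ∈ descents π := by rw [hd]; exact Finset.mem_singleton_self d
  simp only [descents, Finset.mem_filter, Finset.mem_range] at hdmem
  obtain ⟨hdlt, hddes⟩ := hdmem
  have asc : ∀ l, l < n - 1 → l ≠ d → pv π l < pv π (l + 1) := by
    intro l hl hne
    refine asc_of_not_descent π hl (fun hc => ?_)
    have hmem : l ∈ descents π := by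
      simp only [descents, Finset.mem_filter, Finset.mem_range]
      exact ⟨hl, hc⟩
    rw [hd, Finset.mem_singleton] at hmem
    exact hne hmem
  have mono1 : ∀ i j, i < j → j ≤ d → pv π i < pv π j := fun i j hij hjd =>
    chain π (by omega) hij (fun l hl hl' => asc l (by omega) (by omega))
  have mono2 : ∀ i j, d < i → i < j → j < n → pv π i < pv π j := fun i j hdi hij hjn =>
    chain π hjn hij (fun l hl hl' => asc l (by omega) (by omega))
  have step1 : ∀ i, i ≤ d → pv π i = pv π 0 + i := by
    intro i
    induction i with
    | zero => intro _; omega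
    | succ i ih =>
      intro hied
      have hia : pv π i = pv π 0 + i := ih (by omega)
      have hasc : pv π i < pv π (i + 1) := asc i (by omega) (by omega)
      rcases Nat.lt_or_ge (pv π 0 + i + 1) (pv π (i + 1)) with hgt | hle
      · exfalso
        have hv : pv π 0 + i + 1 < n := lt_trans hgt (pv_lt_n π (by omega))
        obtain ⟨k, hk, hpk⟩ := exists_pv π hv
        rcases Nat.lt_trichotomy k (i + 1) with h' | h' | h'
        · rcases Nat.lt_or_ge k i with h'' | h''
          · have := mono1 k i h'' (by omega); omega
          · have : k = i := by omega
            subst this; omega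
        · subst h'; omega
        · rcases le_or_gt k d with h'' | h''
          · have := mono1 (i + 1) k h' h''; omega
          · exact h132 ⟨⟨i, by omega⟩, ⟨i + 1, by omega⟩, ⟨k, hk⟩,
              by simp [Fin.lt_def],
              by simpa [Fin.lt_def] using h',
              (pv_lt_pv_iff π (by omega) hk).mpr (by omega),
              (pv_lt_pv_iff π hk (by omega)).mpr (by omega)⟩
      · omega
  have ha1 : 1 ≤ pv π 0 := by
    by_contra h0
    have h1 : pv π d = d := by have := step1 d le_rfl; omega
    have h2 : pv π (d + 1) < d := by omega
    have h3 : pv π (pv π (d + 1)) = pv π (d + 1) := by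
      have := step1 (pv π (d + 1)) (by omega); omega
    have := pv_inj π (by omega) (by omega : d + 1 < n) h3
    omega
  have hmn : pv π 0 + d < n := by
    have h1 := pv_lt_n π (show d < n by omega)
    have := step1 d le_rfl; omega
  have lemU : ∀ p v, d < p → p < n → v < pv π p → ∃ k, k < p ∧ pv π k = v := by
    intro p v hdp hpn hvp
    obtain ⟨k, hk, hpk⟩ := exists_pv π (lt_trans hvp (pv_lt_n π hpn))
    rcases Nat.lt_trichotomy k p with h' | h' | h'
    · exact ⟨k, h', hpk⟩
    · subst h'; omega
    · exfalso; have := mono2 p k hdp h' hk; omega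
  have step2 : ∀ p, d < p → p < n →
      pv π p = if p ≤ pv π 0 + d then p - d - 1 else p := by
    intro p
    induction p using Nat.strong_induction_on with
    | _ p ih =>
      intro hdp hpn
      by_cases hpm : p ≤ pv π 0 + d
      · rw [if_pos hpm]
        have hlow : p - d - 1 ≤ pv π p := by
          rcases Nat.lt_or_ge (d + 1) p with h' | h'
          · have hprev := ih (p - 1) (by omega) (by omega) (by omega)
            rw [if_pos (by omega)] at hprev
            have hasc : pv π (p - 1) < pv π p := by
              have := asc (p - 1) (by omega) (by omega)
              have e : p - 1 + 1 = p := by omega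
              rwa [e] at this
            omega
          · omega
        rcases Nat.lt_or_ge (p - d - 1) (pv π p) with hgt | hle
        · exfalso
          obtain ⟨k, hkp, hpk⟩ := lemU p (p - d - 1) hdp hpn hgt
          rcases le_or_gt k d with h' | h'
          · have := step1 k h'; omega
          · have hihk := ih k (by omega) h' (by omega)
            rw [if_pos (by omega)] at hihk
            omega
        · omega
      · rw [if_neg hpm]
        have hup : p ≤ pv π p := by
          by_contra hlt
          push_neg at hlt
          have hex : ∃ k, k < n ∧ k ≠ p ∧ pv π k = pv π p := by
            rcases Nat.lt_or_ge (pv π p) (pv π 0) with hva | hva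
            · refine ⟨d + 1 + pv π p, by omega, by omega, ?_⟩
              have := ih (d + 1 + pv π p) (by omega) (by omega) (by omega)
              rw [if_pos (by omega)] at this
              omega
            · rcases le_or_gt (pv π p) (pv π 0 + d) with hvm | hvm
              · refine ⟨pv π p - pv π 0, by omega, by omega, ?_⟩
                have := step1 (pv π p - pv π 0) (by omega); omega
              · refine ⟨pv π p, by omega, by omega, ?_⟩
                have := ih (pv π p) (by omega) (by omega) (by omega)
                rw [if_neg (by omega)] at this
                exact this
          obtain ⟨k, hkn, hknep, hpk⟩ := hex
          exact hknep (pv_inj π hkn hpn hpk)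
        rcases Nat.lt_or_ge p (pv π p) with hgt | hle
        · exfalso
          obtain ⟨k, hkp, hpk⟩ := lemU p p hdp hpn hgt
          rcases le_or_gt k d with h' | h'
          · have := step1 k h'; omega
          · have hihk := ih k (by omega) h' (by omega)
            by_cases hkm : k ≤ pv π 0 + d
            · rw [if_pos hkm] at hihk; omega
            · rw [if_neg hkm] at hihk; omega
        · omega
  refine ⟨pv π 0, pv π 0 + d, ha1, by omega, hmn, ?_⟩
  apply Equiv.ext
  intro i
  apply Fin.ext
  show (π i : ℕ) = fsig (pv π 0) (pv π 0 + d) i.val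
  have hpv : pv π i.val = (π i : ℕ) := by
    rw [pv_eq π i.isLt]
  rw [← hpv]
  rcases le_or_gt i.val d with h' | h'
  · rw [step1 _ h']; unfold fsig; rw [if_pos (by omega)]; omega
  · have hst := step2 i.val h' i.isLt
    unfold fsig
    by_cases h2 : i.val ≤ pv π 0 + d
    · rw [if_pos h2] at hst; rw [if_neg (by omega), if_pos h2]; omega
    · rw [if_neg h2] at hst; rw [if_neg (by omega), if_neg (by omega)]; omega

end Aux

namespace Aux

lemma sig_inj {n a m a' m' : ℕ} {ha ham hm ha' ham' hm'}
    (h : sig n a m ha ham hm = sig n a' m' ha' ham' hm') : a = a' ∧ m = m' := by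
  have e : ∀ i, i < n → fsig a m i = fsig a' m' i := fun i hi =>
    congrArg Fin.val (Equiv.ext_iff.mp h ⟨i, hi⟩)
  have e0 := e 0 (by omega)
  unfold fsig at e0
  split_ifs at e0 with h1 h2 h3 h4 h5 h6 h7 h8 h9
  all_goals try omega
  all_goals (
    have haa : a = a' := by omega
    subst haa
    constructor
    · rfl
    · rcases Nat.lt_trichotomy m m' with hmm | hmm | hmm
      · exfalso
        have e1 := e m' hm'
        unfold fsig at e1
        split_ifs at e1 <;> omega
      · exact hmm
      · exfalso
        have e1 := e m hm
        unfold fsig at e1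
        split_ifs at e1 <;> omega)

def pairEquiv (n : ℕ) : {p : Fin n × Fin n // p.1 < p.2} ≃ Σ y : Fin n, Fin y.val where
  toFun p := ⟨p.1.2, ⟨p.1.1.val, p.2⟩⟩
  invFun q := ⟨(⟨q.2.val, lt_trans q.2.isLt q.1.isLt⟩, q.1), q.2.isLt⟩
  left_inv := by rintro ⟨⟨x, y⟩, h⟩; rfl
  right_inv := by rintro ⟨y, x⟩; rfl

lemma card_pairs (n : ℕ) :
    Nat.card {p : Fin n × Fin n // p.1 < p.2} = n.choose 2 := by
  rw [Nat.card_congr (pairEquiv n), Nat.card_eq_fintype_card, Fintype.card_sigma]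
  simp only [Fintype.card_fin]
  rw [Fin.sum_univ_eq_sum_range (fun i => i) n, Nat.choose_two_right]
  have := Finset.sum_range_id_mul_two n
  omega

end Aux


namespace Aux

lemma des_sig {n a m : ℕ} (ha : 1 ≤ a) (ham : a ≤ m) (hm : m < n) :
    (descents (sig n a m ha ham hm)).card = 1 := by
  rw [descents_sig]; simp

end Aux

theorem descent_distribution_avoid_132_321 (n : ℕ) (hn : 2 ≤ n) :
    Nat.card {π : Equiv.Perm (Fin n) // (Avoids132 π ∧ Avoids321 π) ∧ des π = 0} = 1 ∧
    Nat.card {π : Equiv.Perm (Fin n) // (Avoids132 π ∧ Avoids321 π) ∧ des π = 1} =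
      Nat.choose n 2 ∧
    ∀ k : ℕ, 2 ≤ k →
      Nat.card {π : Equiv.Perm (Fin n) // (Avoids132 π ∧ Avoids321 π) ∧ des π = k} = 0 := by
  refine ⟨?_, ?_, ?_⟩
  · rw [Nat.card_eq_one_iff_unique]
    constructor
    · constructor
      rintro ⟨π1, ⟨_, h1⟩⟩ ⟨π2, ⟨_, h2⟩⟩
      have e1 : π1 = 1 := Aux.eq_id_of_no_descent π1 (Finset.card_eq_zero.mp h1)
      have e2 : π2 = 1 := Aux.eq_id_of_no_descent π2 (Finset.card_eq_zero.mp h2)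
      exact Subtype.ext (e1.trans e2.symm)
    · refine ⟨⟨1, ⟨⟨?_, ?_⟩, ?_⟩⟩⟩
      · rintro ⟨i, j, k, hij, hjk, h3, h4⟩
        simp only [Equiv.Perm.one_apply] at h3 h4
        exact absurd hjk (not_lt.mpr h4.le)
      · rintro ⟨i, j, k, hij, hjk, h3, h4⟩
        simp only [Equiv.Perm.one_apply] at h3 h4
        exact absurd hij (not_lt.mpr h4.le)
      · show (descents (1 : Equiv.Perm (Fin n))).card = 0
        rw [Finset.card_eq_zero, descents, Finset.filter_eq_empty_iff]
        intro i hi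
        rw [Finset.mem_range] at hi
        rw [Aux.pv_eq _ (show i < n by omega), Aux.pv_eq _ (show i + 1 < n by omega)]
        simp only [Equiv.Perm.one_apply]
        omega
  · set F : {p : Fin n × Fin n // p.1 < p.2} →
        {π : Equiv.Perm (Fin n) // (Avoids132 π ∧ Avoids321 π) ∧ des π = 1} := fun p =>
      ⟨Aux.sig n (p.1.1.val + 1) p.1.2.val (by omega)
        (by have := Fin.lt_def.mp p.2; omega) p.1.2.isLt,
       ⟨⟨Aux.avoids132_sig _ _ _, Aux.avoids321_sig _ _ _⟩, Aux.des_sig _ _ _⟩⟩ with hF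
    have hbij : Function.Bijective F := by
      constructor
      · rintro ⟨⟨x, y⟩, hxy⟩ ⟨⟨x', y'⟩, hxy'⟩ h
        have hs := congrArg Subtype.val h
        simp only [hF] at hs
        obtain ⟨h1, h2⟩ := Aux.sig_inj hs
        apply Subtype.ext
        simp only [Prod.mk.injEq]
        exact ⟨Fin.ext (by omega), Fin.ext h2⟩
      · rintro ⟨π, ⟨⟨h132, h321⟩, hdes⟩⟩
        obtain ⟨a, m, ha, ham, hm, hπ⟩ := Aux.classify π h132 hdes
        obtain ⟨x, rfl⟩ : ∃ x, a = x + 1 := ⟨a - 1, by omega⟩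
        refine ⟨⟨(⟨x, by omega⟩, ⟨m, hm⟩), Fin.mk_lt_mk.mpr (by omega)⟩, ?_⟩
        exact Subtype.ext hπ.symm
    exact ((Nat.card_eq_of_bijective F hbij).symm).trans (Aux.card_pairs n)
  · intro k hk
    have hE : IsEmpty {π : Equiv.Perm (Fin n) // (Avoids132 π ∧ Avoids321 π) ∧ des π = k} := by
      constructor
      rintro ⟨π, ⟨⟨h132, h321⟩, hdk⟩⟩
      have h1 := Aux.des_le_one π h132 h321
      have e : des π = (descents π).card := rfl
      omega
    exact Nat.card_of_isEmpty
end

section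
/- Every permutation π ∈ S_n(132,321) with its maximum in position k, 1 < k < n, has the form π = (α ⊕ 1) ⊖ β where α ⊕ 1 ∈ S_k and β ∈ S_{n-k} are both increasing permutations; in particular π_{k+1} < π_{k+2} < ... < π_n and π_i = n - k + i for 1 ≤ i ≤ k-1. -/
/-! Since the maximum sits at position `k`, avoiding 321 forces the entries after `k` to increase, and
avoiding 132 forces every entry before `k` to exceed every entry after `k`. Together with one entry
after `k`, an inversion before `k` would be a 321, so the prefix increases as well. Hence the entry
at position `i < k` exceeds the `i` entries before it and the `n - 1 - k` entries after `k`, and is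
exceeded by the `k - i` entries in `(i, k]`; these two counts pin its value down. -/

open Finset

section Counting

variable {n : ℕ} {f : Fin n → Fin n}

theorem Fin.card_le_of_forall_apply_lt (hf : Function.Injective f) {s : Finset (Fin n)}
    {x : Fin n} (h : ∀ a ∈ s, f a < x) : #s ≤ x := by
  simpa using card_le_card_of_injOn f (fun a ha => mem_Iio.2 (h a ha)) hf.injOn

theorem Fin.card_le_of_forall_lt_apply (hf : Function.Injective f) {s : Finset (Fin n)}
    {x : Fin n} (h : ∀ a ∈ s, x < f a) : #s ≤ n - 1 - x := by
  simpa using card_le_card_of_injOn f (fun a ha => mem_Ioi.2 (h a ha)) hf.injOn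

end Counting

section MaximumAt

variable {n : ℕ} {π : Equiv.Perm (Fin n)} {k : Fin n}

theorem Equiv.Perm.apply_lt_of_val_apply_eq (hmax : (π k : ℕ) = n - 1) {m : Fin n}
    (hm : m ≠ k) : π m < π k := by
  have hne : (π m : ℕ) ≠ π k := fun h => hm (π.injective (Fin.ext h))
  have := (π m).isLt
  exact Fin.lt_def.2 (by omega)

theorem Avoids321.strictMonoOn_Ioi (h321 : Avoids321 π) (hk : ∀ m ≠ k, π m < π k) :
    StrictMonoOn π (Set.Ioi k) := by
  intro i hi j _ hij
  by_contra h
  have hji : π j < π i := lt_of_le_of_ne (not_lt.1 h) (π.injective.ne hij.ne')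
  exact h321 ⟨k, i, j, hi, hij, hji, hk i (ne_of_gt hi)⟩

theorem Avoids132.apply_lt_apply (h132 : Avoids132 π) (hk : ∀ m ≠ k, π m < π k)
    {i m : Fin n} (hik : i < k) (hkm : k < m) : π m < π i := by
  by_contra h
  have him : π i < π m := lt_of_le_of_ne (not_lt.1 h) (π.injective.ne (hik.trans hkm).ne)
  exact h132 ⟨i, k, m, hik, hkm, him, hk m (ne_of_gt hkm)⟩

theorem strictMonoOn_Iio_of_avoids_132_321 (h132 : Avoids132 π) (h321 : Avoids321 π)
    (hk : ∀ m ≠ k, π m < π k) {m : Fin n} (hkm : k < m) : StrictMonoOn π (Set.Iio k) := by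
  intro i _ j hj hij
  by_contra h
  have hji : π j < π i := lt_of_le_of_ne (not_lt.1 h) (π.injective.ne hij.ne')
  exact h321 ⟨i, j, m, hij, lt_trans hj hkm, h132.apply_lt_apply hk hj hkm, hji⟩

end MaximumAt

theorem structure_avoid_132_321_general (n : ℕ) (π : Equiv.Perm (Fin n))
    (h132 : Avoids132 π) (h321 : Avoids321 π) (k : Fin n)
    (hmax : (π k : ℕ) = n - 1) (hk2 : (k : ℕ) < n - 1) :
    (∀ i j : Fin n, k < i → i < j → π i < π j) ∧
    (∀ i : Fin n, i < k → (π i : ℕ) = n - 1 - (k : ℕ) + (i : ℕ)) := by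
  have hk : ∀ m ≠ k, π m < π k := fun m => π.apply_lt_of_val_apply_eq hmax
  have hsucc : k < ⟨k + 1, by omega⟩ := Fin.lt_def.2 (Nat.lt_succ_self _)
  have hprefix := strictMonoOn_Iio_of_avoids_132_321 h132 h321 hk hsucc
  refine ⟨fun i j hki hij => h321.strictMonoOn_Ioi hk hki (hki.trans hij) hij, fun i hik => ?_⟩
  have hlow : #(Iio i ∪ Ioi k) ≤ π i := by
    refine Fin.card_le_of_forall_apply_lt π.injective fun a ha => ?_
    rcases mem_union.1 ha with ha | ha
    · exact hprefix (mem_Iio.1 ha |>.trans hik) hik (mem_Iio.1 ha)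
    · exact h132.apply_lt_apply hk hik (mem_Ioi.1 ha)
  have hup : #(Ioc i k) ≤ n - 1 - π i := by
    refine Fin.card_le_of_forall_lt_apply π.injective fun a ha => ?_
    obtain ⟨hia, hak⟩ := mem_Ioc.1 ha
    rcases hak.lt_or_eq with hak | rfl
    · exact hprefix hik hak hia
    · exact hk i hik.ne
  have hdisj : Disjoint (Iio i) (Ioi k) :=
    disjoint_left.2 fun a hai hak => (mem_Ioi.1 hak).not_gt ((mem_Iio.1 hai).trans hik)
  rw [card_union_of_disjoint hdisj, Fin.card_Iio, Fin.card_Ioi] at hlow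
  rw [Fin.card_Ioc] at hup
  have := (π i).isLt
  have := Fin.lt_def.1 hik
  omega

theorem structure_avoid_132_321 (n : ℕ) (π : Equiv.Perm (Fin n))
    (h132 : Avoids132 π) (h321 : Avoids321 π) (k : Fin n)
    (hmax : (π k : ℕ) = n - 1) (hk1 : 0 < (k : ℕ)) (hk2 : (k : ℕ) < n - 1) :
    (∀ i j : Fin n, k < i → i < j → π i < π j) ∧
    (∀ i : Fin n, i < k → (π i : ℕ) = n - 1 - (k : ℕ) + (i : ℕ)) :=
  structure_avoid_132_321_general n π h132 h321 k hmax hk2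
end

section
/- The map g: S_n(231,312) → S_n(213,231), defined by requiring that g(π) has a right-to-left maximum in position n+1-i if and only if π has a left-to-right maximum in position i, is a well-defined bijection satisfying asc(π) = des(g(π)), des(π) = asc(g(π)), MNA(π) = MND(g(π)) and MND(π) = MNA(g(π)). -/
open Finset Function Equiv

namespace PermDescents

variable {n : ℕ}

section Standardization

variable {α : Type*} [LinearOrder α]

theorem lt_iff_lt_of_forall_lt_iff {ι β : Type*} [LinearOrder ι] [LinearOrder β]
    {f : ι → α} {g : ι → β} (hf : Injective f) (hg : Injective g)
    (h : ∀ i j, i < j → (f i < f j ↔ g i < g j)) (i j : ι) : f i < f j ↔ g i < g j := by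
  rcases lt_trichotomy i j with hij | rfl | hji
  · exact h i j hij
  · simp
  · rw [← not_le, ← not_le, (hf.ne hji.ne).le_iff_lt, (hg.ne hji.ne).le_iff_lt, h j i hji]

theorem perm_eq_of_forall_lt_iff {σ τ : Perm (Fin n)}
    (h : ∀ i j, i < j → (σ i < σ j ↔ τ i < τ j)) : σ = τ := by
  have hmono : StrictMono (σ ∘ τ.symm) := fun a b hab => by
    simpa [lt_iff_lt_of_forall_lt_iff σ.injective τ.injective h] using hab
  have hid : σ ∘ τ.symm = id :=
    (hmono.range_inj strictMono_id).1 (by simp [Set.range_comp])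
  ext i
  simpa using congrArg Fin.val (congrFun hid (τ i))

theorem exists_perm_lt_iff_lt {f : Fin n → α} (hf : Injective f) :
    ∃ σ : Perm (Fin n), ∀ i j, σ i < σ j ↔ f i < f j := by
  have hs : StrictMono (f ∘ Tuple.sort f) :=
    (Tuple.monotone_sort f).strictMono_of_injective (hf.comp (Tuple.sort f).injective)
  refine ⟨(Tuple.sort f).symm, fun i j => ?_⟩
  simpa using (hs.lt_iff_lt (a := (Tuple.sort f).symm i) (b := (Tuple.sort f).symm j)).symm

end Standardization

section Descents

def Realizes (R : Fin n → Fin n → Prop) (σ : Perm (Fin n)) : Prop :=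
  ∀ i j, i < j → (σ i < σ j ↔ R i j)

variable {R : Fin n → Fin n → Prop} {σ τ : Perm (Fin n)} {D : Finset ℕ}

theorem Realizes.eq (hσ : Realizes R σ) (hτ : Realizes R τ) : σ = τ :=
  perm_eq_of_forall_lt_iff fun i j hij => (hσ i j hij).trans (hτ i j hij).symm

theorem exists_realizes {α : Type*} [LinearOrder α] {f : Fin n → α} (hf : Injective f)
    (hR : ∀ i j, i < j → (f i < f j ↔ R i j)) : ∃ σ, Realizes R σ :=
  let ⟨σ, hσ⟩ := exists_perm_lt_iff_lt hf
  ⟨σ, fun i j hij => (hσ i j).trans (hR i j hij)⟩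

theorem descents_subset (σ : Perm (Fin n)) : descents σ ⊆ range (n - 1) := filter_subset _ _

theorem ascents_subset (σ : Perm (Fin n)) : ascents σ ⊆ range (n - 1) := filter_subset _ _

theorem pv_of_lt (σ : Perm (Fin n)) {i : ℕ} (h : i < n) : pv σ i = σ ⟨i, h⟩ := dif_pos h

theorem mem_ascents_iff (σ : Perm (Fin n)) {i : ℕ} (h : i + 1 < n) :
    i ∈ ascents σ ↔ σ ⟨i, by omega⟩ < σ ⟨i + 1, h⟩ := by
  rw [ascents, mem_filter, mem_range, pv_of_lt σ h, pv_of_lt σ (by omega), ← Fin.lt_def]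
  exact and_iff_right (by omega)

theorem notMem_descents_iff (σ : Perm (Fin n)) {i : ℕ} (h : i + 1 < n) :
    i ∉ descents σ ↔ σ ⟨i, by omega⟩ < σ ⟨i + 1, h⟩ := by
  have hne : σ ⟨i, by omega⟩ ≠ σ ⟨i + 1, h⟩ := σ.injective.ne (by simp)
  rw [descents, mem_filter, mem_range, pv_of_lt σ h, pv_of_lt σ (by omega), ← Fin.lt_def,
    and_iff_right (by omega), not_lt, hne.le_iff_lt]

theorem ascents_eq_sdiff (σ : Perm (Fin n)) : ascents σ = range (n - 1) \ descents σ := by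
  ext i
  by_cases h : i + 1 < n
  · rw [mem_sdiff, mem_ascents_iff σ h, notMem_descents_iff σ h, mem_range]
    exact and_iff_right (by omega) |>.symm
  · have : i ∉ range (n - 1) := by rw [mem_range]; omega
    exact iff_of_false (fun hi => this (ascents_subset σ hi)) (fun hi => this (mem_sdiff.1 hi).1)

theorem Realizes.descents_eq (hσ : Realizes R σ) (hD : D ⊆ range (n - 1))
    (hR : ∀ i (h : i + 1 < n), R ⟨i, by omega⟩ ⟨i + 1, h⟩ ↔ i ∉ D) : descents σ = D := by
  ext i
  by_cases h : i + 1 < n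
  · rw [← not_iff_not, notMem_descents_iff σ h, hσ _ _ (by fin_omega), hR i h]
  · have : i ∉ range (n - 1) := by rw [mem_range]; omega
    exact iff_of_false (fun hi => this (descents_subset σ hi)) (fun hi => this (hD hi))

abbrev DescentSet (n : ℕ) := {D : Finset ℕ // D ⊆ range (n - 1)}

theorem bijective_descents {P : Perm (Fin n) → Prop} {R : Finset ℕ → Fin n → Fin n → Prop}
    (hP : ∀ σ, P σ → Realizes (R (descents σ)) σ) (hR : ∀ D σ, Realizes (R D) σ → P σ)
    (hsucc : ∀ D i (h : i + 1 < n), R D ⟨i, by omega⟩ ⟨i + 1, h⟩ ↔ i ∉ D)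
    (hex : ∀ D, ∃ σ, Realizes (R D) σ) :
    Bijective fun σ : {σ // P σ} => (⟨descents σ.1, descents_subset σ.1⟩ : DescentSet n) := by
  refine ⟨fun σ τ h => Subtype.ext ((hP σ σ.2).eq ?_), fun D => ?_⟩
  · rw [show descents σ.1 = descents τ.1 from congrArg Subtype.val h]
    exact hP τ τ.2
  · obtain ⟨σ, hσ⟩ := hex D.1
    exact ⟨⟨σ, hR _ σ hσ⟩, Subtype.ext (hσ.descents_eq D.2 (hsucc D.1))⟩

end Descents

section Layered

def AscentBetween (D : Finset ℕ) (i j : Fin n) : Prop := ∃ m, (i : ℕ) ≤ m ∧ m < j ∧ m ∉ D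

theorem ascentBetween_succ_iff (D : Finset ℕ) (i : ℕ) (h : i + 1 < n) :
    AscentBetween D ⟨i, by omega⟩ ⟨i + 1, h⟩ ↔ i ∉ D := by
  refine ⟨fun ⟨m, him, hmi, hm⟩ => ?_, fun hi => ⟨i, le_rfl, Nat.lt_succ_self i, hi⟩⟩
  obtain rfl : m = i := by fin_omega
  exact hm

theorem card_range_sdiff_lt_iff {D : Finset ℕ} {i j : ℕ} (hij : i ≤ j) :
    #(range i \ D) < #(range j \ D) ↔ ∃ m, i ≤ m ∧ m < j ∧ m ∉ D := by
  have hsub : range i \ D ⊆ range j \ D := sdiff_subset_sdiff (range_subset_range.2 hij) le_rfl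
  constructor
  · intro hlt
    obtain ⟨m, hmj, hmi⟩ := exists_mem_notMem_of_card_lt_card hlt
    simp only [mem_sdiff, mem_range, not_and, not_not] at hmj hmi
    exact ⟨m, not_lt.1 fun h => hmj.2 (hmi h), hmj.1, hmj.2⟩
  · rintro ⟨m, him, hmj, hm⟩
    exact card_lt_card ((ssubset_iff_of_subset hsub).2 ⟨m, by simp [hmj, hm], by simp [him]⟩)

def layeredKey (D : Finset ℕ) (i : Fin n) : ℕ ×ₗ ℕᵒᵈ :=
  toLex (#(range i \ D), OrderDual.toDual (i : ℕ))

theorem layeredKey_lt_iff {D : Finset ℕ} {i j : Fin n} (hij : i < j) :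
    layeredKey D i < layeredKey D j ↔ AscentBetween D i j := by
  rw [layeredKey, layeredKey, Prod.Lex.toLex_lt_toLex, AscentBetween,
    ← card_range_sdiff_lt_iff hij.le, OrderDual.toDual_lt_toDual]
  simp [hij.not_gt]

theorem layeredKey_injective (D : Finset ℕ) : Injective (layeredKey (n := n) D) :=
  fun i j h => Fin.ext (by simp [layeredKey] at h; exact h.2)

variable {π : Perm (Fin n)}

theorem avoids_of_realizes_ascentBetween {D : Finset ℕ} (h : Realizes (AscentBetween D) π) :
    Avoids231 π ∧ Avoids312 π := by
  refine ⟨fun ⟨i, j, k, hij, hjk, hki, hij'⟩ => ?_, fun ⟨i, j, k, hij, hjk, hjk', hki⟩ => ?_⟩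
  · obtain ⟨m, him, hmj, hm⟩ := (h i j hij).1 hij'
    exact lt_asymm hki ((h i k (hij.trans hjk)).2 ⟨m, him, by omega, hm⟩)
  · obtain ⟨m, hjm, hmk, hm⟩ := (h j k hjk).1 hjk'
    exact lt_asymm hki ((h i k (hij.trans hjk)).2 ⟨m, by omega, hmk, hm⟩)

theorem ascentBetween_of_lt {i j : Fin n} (hij : i < j) (hlt : π i < π j) :
    AscentBetween (descents π) i j := by
  by_contra hdes
  simp only [AscentBetween, not_exists, not_and, not_not] at hdes
  have hanti : StrictAntiOn (pv π) (Set.Icc (i : ℕ) j) :=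
    strictAntiOn_of_succ_lt Set.ordConnected_Icc fun a _ ha hb => by
      rw [Order.succ_eq_add_one] at hb ⊢
      exact (mem_filter.1 (hdes a ha.1 hb.2)).2
  have := hanti ⟨le_rfl, hij.le⟩ ⟨hij.le, le_rfl⟩ hij
  simp only [pv_of_lt π i.2, pv_of_lt π j.2, Fin.eta] at this
  exact lt_asymm hlt this

theorem lt_of_ascentBetween (h231 : Avoids231 π) (h312 : Avoids312 π) {i j : Fin n}
    (hij : i < j) (h : AscentBetween (descents π) i j) : π i < π j := by
  obtain ⟨m, him, hmj, hm⟩ := h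
  have hm1 : m + 1 < n := by omega
  have hasc := (notMem_descents_iff π hm1).1 hm
  by_contra hge
  have hji : π j < π i := lt_of_le_of_ne (not_lt.1 hge) (π.injective.ne hij.ne')
  -- `π (m + 1)` above `π i` completes a 231, below it a 312.
  rcases lt_trichotomy (π i) (π ⟨m + 1, hm1⟩) with h | h | h
  · have hbj : (⟨m + 1, hm1⟩ : Fin n) < j := by
      refine lt_of_le_of_ne (by fin_omega) ?_
      rintro rfl
      exact lt_asymm h hji
    exact h231 ⟨i, _, j, by fin_omega, hbj, hji, h⟩
  · exact absurd (π.injective h) (ne_of_lt (by fin_omega))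
  · have hia : i < ⟨m, by omega⟩ := by
      refine lt_of_le_of_ne (by fin_omega) ?_
      intro hia
      rw [hia] at h
      exact lt_asymm h hasc
    exact h312 ⟨i, _, _, hia, by fin_omega, hasc, h⟩

theorem realizes_ascentBetween (h231 : Avoids231 π) (h312 : Avoids312 π) :
    Realizes (AscentBetween (descents π)) π :=
  fun _ _ hij => ⟨ascentBetween_of_lt hij, lt_of_ascentBetween h231 h312 hij⟩

end Layered

section MaxMin

def maxMinKey (D : Finset ℕ) (i : Fin n) : ℕ := if (i : ℕ) ∈ D then 2 * n - i else i

theorem maxMinKey_lt_iff {D : Finset ℕ} {i j : Fin n} (hij : i < j) :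
    maxMinKey D i < maxMinKey D j ↔ (i : ℕ) ∉ D := by
  have := j.2
  unfold maxMinKey
  split_ifs <;> simp only [not_true, not_false_iff, iff_true, iff_false, *] <;> omega

theorem maxMinKey_injective (D : Finset ℕ) : Injective (maxMinKey (n := n) D) := by
  intro i j h
  have := i.2
  have := j.2
  unfold maxMinKey at h
  ext
  split_ifs at h <;> omega

variable {σ : Perm (Fin n)}

theorem avoids_of_realizes_notMem {D : Finset ℕ} (h : Realizes (fun i _ => (i : ℕ) ∉ D) σ) :
    Avoids213 σ ∧ Avoids231 σ :=
  ⟨fun ⟨i, j, k, hij, hjk, hji, hik⟩ =>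
      lt_asymm hji ((h i j hij).2 ((h i k (hij.trans hjk)).1 hik)),
    fun ⟨i, j, k, hij, hjk, hki, hij'⟩ =>
      lt_asymm hki ((h i k (hij.trans hjk)).2 ((h i j hij).1 hij'))⟩

theorem realizes_notMem_descents (h213 : Avoids213 σ) (h231 : Avoids231 σ) :
    Realizes (fun i _ => (i : ℕ) ∉ descents σ) σ := by
  intro i j hij
  have hs : (i : ℕ) + 1 < n := by omega
  simp only [notMem_descents_iff σ hs, Fin.eta]
  rcases (show (⟨i + 1, hs⟩ : Fin n) ≤ j by fin_omega).eq_or_lt with hj | hsj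
  · rw [hj]
  · have hsucc : i < ⟨i + 1, hs⟩ := by fin_omega
    constructor
    · intro hij'
      by_contra hsi
      have hsi' := lt_of_le_of_ne (not_lt.1 hsi) (σ.injective.ne hsucc.ne')
      exact h213 ⟨i, _, j, hsucc, hsj, hsi', hij'⟩
    · intro his
      by_contra hji
      have hji' := lt_of_le_of_ne (not_lt.1 hji) (σ.injective.ne hij.ne')
      exact h231 ⟨i, _, j, hsucc, hsj, hji', his⟩

end MaxMin

section Reflect

/-- Reversing positions `i ↦ n - 1 - i` sends the adjacent pair `(x, x + 1)` to
`(n - 2 - x, n - 1 - x)`. -/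
def reflect (n : ℕ) (A : Finset ℕ) : Finset ℕ := (range (n - 1)).filter fun x => n - 2 - x ∈ A

variable {A B : Finset ℕ}

theorem mem_reflect {x : ℕ} : x ∈ reflect n A ↔ x < n - 1 ∧ n - 2 - x ∈ A := by
  simp [reflect]

theorem reflect_subset : reflect n A ⊆ range (n - 1) := filter_subset _ _

theorem reflect_mono (h : A ⊆ B) : reflect n A ⊆ reflect n B :=
  monotone_filter_right _ fun _ _ hx => h hx

theorem reflect_reflect (hA : A ⊆ range (n - 1)) : reflect n (reflect n A) = A := by
  ext x
  simp only [mem_reflect]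
  constructor
  · rintro ⟨hx, -, hA'⟩
    rwa [show n - 2 - (n - 2 - x) = x by omega] at hA'
  · intro hx
    have := mem_range.1 (hA hx)
    exact ⟨by omega, by omega, by rwa [show n - 2 - (n - 2 - x) = x by omega]⟩

theorem reflect_sdiff (A : Finset ℕ) :
    reflect n (range (n - 1) \ A) = range (n - 1) \ reflect n A := by
  ext x
  simp only [mem_reflect, mem_sdiff, mem_range]
  constructor
  · rintro ⟨hx, -, hA⟩
    exact ⟨hx, fun h => hA h.2⟩
  · rintro ⟨hx, hA⟩
    exact ⟨hx, by omega, fun h => hA ⟨hx, h⟩⟩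

theorem card_reflect (hA : A ⊆ range (n - 1)) : #(reflect n A) = #A := by
  refine card_nbij' (n - 2 - ·) (n - 2 - ·) (fun x hx => (mem_reflect.1 hx).2)
    (fun x hx => ?_) (fun x hx => ?_) (fun x hx => ?_)
  · have := mem_range.1 (hA hx)
    show n - 2 - x ∈ reflect n A
    exact mem_reflect.2 ⟨by omega, by rwa [show n - 2 - (n - 2 - x) = x by omega]⟩
  · have := (mem_reflect.1 hx).1
    dsimp only
    omega
  · have := mem_range.1 (hA hx)
    dsimp only
    omega

def nonOverlappingCards (A : Finset ℕ) : Set ℕ :=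
  {k | ∃ S ⊆ A, #S = k ∧ ∀ i ∈ S, ∀ j ∈ S, i < j → i + 1 < j}

theorem MNA_eq (π : Perm (Fin n)) : MNA π = sSup (nonOverlappingCards (ascents π)) := rfl

theorem MND_eq (π : Perm (Fin n)) : MND π = sSup (nonOverlappingCards (descents π)) := rfl

theorem nonOverlappingCards_subset_reflect (hA : A ⊆ range (n - 1)) :
    nonOverlappingCards A ⊆ nonOverlappingCards (reflect n A) := by
  rintro k ⟨S, hSA, rfl, hS⟩
  refine ⟨reflect n S, reflect_mono hSA, card_reflect (hSA.trans hA), fun i hi j hj hij => ?_⟩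
  rw [mem_reflect] at hi hj
  have := hS _ hj.2 _ hi.2 (by omega)
  omega

theorem nonOverlappingCards_reflect (hA : A ⊆ range (n - 1)) :
    nonOverlappingCards (reflect n A) = nonOverlappingCards A := by
  refine (nonOverlappingCards_subset_reflect hA).antisymm' ?_
  simpa only [reflect_reflect hA] using
    nonOverlappingCards_subset_reflect (reflect_subset (n := n) (A := A))

end Reflect

section Maxima

theorem isLRMax_iff {D : Finset ℕ} {π : Perm (Fin n)} (h : Realizes (AscentBetween D) π)
    (i : Fin n) : IsLRMax π i ↔ (i : ℕ) = 0 ∨ (i : ℕ) - 1 ∉ D := by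
  constructor
  · refine fun hmax => or_iff_not_imp_left.2 fun hi => ?_
    have hprev : (⟨i - 1, by omega⟩ : Fin n) < i := by fin_omega
    obtain ⟨m, him, hmi, hm⟩ := (h _ i hprev).1 (hmax _ hprev)
    rwa [show m = i - 1 by fin_omega] at hm
  · rintro hi j hji
    exact (h j i hji).2 ⟨i - 1, by omega, by omega, hi.resolve_left (by omega)⟩

theorem isRLMax_iff {D : Finset ℕ} {σ : Perm (Fin n)} (h : Realizes (fun i _ => (i : ℕ) ∉ D) σ)
    (j : Fin n) : IsRLMax σ j ↔ (j : ℕ) = n - 1 ∨ (j : ℕ) ∈ D := by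
  have hlt : ∀ k, j < k → (σ k < σ j ↔ (j : ℕ) ∈ D) := fun k hjk => by
    rw [← not_le, (σ.injective.ne hjk.ne).le_iff_lt, h j k hjk, not_not]
  constructor
  · refine fun hmax => or_iff_not_imp_left.2 fun hj => ?_
    have hnext : j < ⟨j + 1, by omega⟩ := by fin_omega
    exact (hlt _ hnext).1 (hmax _ hnext)
  · rintro (hj | hj) k hjk
    · omega
    · exact (hlt k hjk).2 hj

theorem isLRMax_iff_isRLMax_rev {π σ : Perm (Fin n)}
    (hπ : Realizes (AscentBetween (descents π)) π)
    (hσ : Realizes (fun i _ => (i : ℕ) ∉ descents σ) σ)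
    (hdes : descents σ = reflect n (ascents π)) (i : Fin n) :
    IsLRMax π i ↔ IsRLMax σ i.rev := by
  rw [isLRMax_iff hπ, isRLMax_iff hσ, hdes, mem_reflect, ascents_eq_sdiff, mem_sdiff, mem_range,
    Fin.val_rev]
  rcases Nat.eq_zero_or_pos i with hi | hi
  · simp [hi]
  · have := i.2
    rw [show n - 2 - (n - (i + 1)) = i - 1 by omega]
    simp [show (i : ℕ) ≠ 0 by omega, show n - (i + 1) ≠ n - 1 by omega,
      show n - (i + 1) < n - 1 by omega, show (i : ℕ) - 1 < n - 1 by omega]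

end Maxima

noncomputable def layeredEquiv (n : ℕ) :
    {π : Perm (Fin n) // Avoids231 π ∧ Avoids312 π} ≃ DescentSet n :=
  Equiv.ofBijective _ (bijective_descents (fun _ hπ => realizes_ascentBetween hπ.1 hπ.2)
    (fun _ _ => avoids_of_realizes_ascentBetween) ascentBetween_succ_iff
    fun D => exists_realizes (layeredKey_injective D) fun _ _ => layeredKey_lt_iff)

noncomputable def maxMinEquiv (n : ℕ) :
    {σ : Perm (Fin n) // Avoids213 σ ∧ Avoids231 σ} ≃ DescentSet n :=
  Equiv.ofBijective _ (bijective_descents (R := fun D i _ => (i : ℕ) ∉ D)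
    (fun _ hσ => realizes_notMem_descents hσ.1 hσ.2) (fun _ _ => avoids_of_realizes_notMem)
    (fun _ _ _ => Iff.rfl)
    fun D => exists_realizes (maxMinKey_injective D) fun _ _ => maxMinKey_lt_iff)

def complReflect (n : ℕ) : Perm (DescentSet n) :=
  Involutive.toPerm (fun D => ⟨reflect n (range (n - 1) \ D.1), reflect_subset⟩) fun D =>
    Subtype.ext (by
      dsimp only
      rw [← reflect_sdiff, Finset.sdiff_sdiff_eq_self D.2, reflect_reflect D.2])

noncomputable def layeredToMaxMin (n : ℕ) :
    {π : Perm (Fin n) // Avoids231 π ∧ Avoids312 π} ≃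
      {σ : Perm (Fin n) // Avoids213 σ ∧ Avoids231 σ} :=
  (layeredEquiv n).trans ((complReflect n).trans (maxMinEquiv n).symm)

variable (π : {π : Perm (Fin n) // Avoids231 π ∧ Avoids312 π})

theorem descents_layeredToMaxMin :
    descents (layeredToMaxMin n π).1 = reflect n (ascents π.1) := by
  rw [ascents_eq_sdiff]
  exact congrArg Subtype.val ((maxMinEquiv n).apply_symm_apply (complReflect n (layeredEquiv n π)))

theorem ascents_layeredToMaxMin :
    ascents (layeredToMaxMin n π).1 = reflect n (descents π.1) := by
  rw [ascents_eq_sdiff, descents_layeredToMaxMin, ascents_eq_sdiff, ← reflect_sdiff,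
    Finset.sdiff_sdiff_eq_self (descents_subset _)]

end PermDescents

open PermDescents

theorem map_g_bijection (n : ℕ) :
    ∃ e : {π : Equiv.Perm (Fin n) // Avoids231 π ∧ Avoids312 π} ≃
          {σ : Equiv.Perm (Fin n) // Avoids213 σ ∧ Avoids231 σ},
      ∀ π, (∀ i : Fin n, IsLRMax π.1 i ↔ IsRLMax (e π).1 i.rev) ∧
        asc π.1 = des (e π).1 ∧ des π.1 = asc (e π).1 ∧
        MNA π.1 = MND (e π).1 ∧ MND π.1 = MNA (e π).1 := by
  refine ⟨layeredToMaxMin n, fun π => ⟨?_, ?_, ?_, ?_, ?_⟩⟩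
  · exact isLRMax_iff_isRLMax_rev (realizes_ascentBetween π.2.1 π.2.2)
      (realizes_notMem_descents (layeredToMaxMin n π).2.1 (layeredToMaxMin n π).2.2)
      (descents_layeredToMaxMin π)
  · rw [asc, des, descents_layeredToMaxMin, card_reflect (ascents_subset _)]
  · rw [des, asc, ascents_layeredToMaxMin, card_reflect (descents_subset _)]
  · rw [MNA_eq, MND_eq, descents_layeredToMaxMin, nonOverlappingCards_reflect (ascents_subset _)]
  · rw [MND_eq, MNA_eq, ascents_layeredToMaxMin, nonOverlappingCards_reflect (descents_subset _)]
end

section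
/- The number of permutations in S_n(123,132) with exactly k right-to-left maxima equals C(n-1, k-1) for n ≥ 1 and 1 ≤ k ≤ n. -/
/-!
An entry of `π` starts a `123` or a `132` exactly when at least two larger entries follow it, and
it is a right-to-left maximum exactly when none does. The sequence `c i = #{j > i | π i < π j}`
is a Lehmer code: it determines `π` (read left to right, `π i` is the value not used yet with
exactly `c i` unused values above it), and by counting it takes every value with `c i < n - i`. Hence the avoiders
with `k` right-to-left maxima correspond to the 0/1 sequences of this kind with `n - k` ones,
which may sit anywhere among the first `n - 1` positions.
-/

open Finset
open scoped Nat

theorem Finset.strictAntiOn_card_filter_lt {α : Type*} [LinearOrder α] (s : Finset α) :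
    StrictAntiOn (fun x => #{v ∈ s | x < v}) s := by
  intro x _ y hy hxy
  refine card_lt_card ⟨fun v hv => ?_, fun hsub => ?_⟩
  · simp only [mem_filter] at hv ⊢
    exact ⟨hv.1, hxy.trans hv.2⟩
  · simpa using hsub (mem_filter.2 ⟨hy, hxy⟩)

theorem Fin.prod_univ_sub_eq_factorial (n : ℕ) : ∏ i : Fin n, (n - (i : ℕ)) = n ! := by
  rw [Fin.prod_univ_eq_prod_range (fun i => n - i), ← Nat.descFactorial_eq_prod_range,
    Nat.descFactorial_self]

section RightLarger

variable {n : ℕ} (π : Equiv.Perm (Fin n))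

def rightLarger (i : Fin n) : ℕ := #{j | i < j ∧ π i < π j}

theorem rightLarger_lt (i : Fin n) : rightLarger π i < n - i :=
  calc rightLarger π i ≤ #(Ioi i) := card_le_card fun j hj => by simp_all
    _ < n - i := by rw [Fin.card_Ioi]; omega

theorem rightLarger_eq_zero_iff {i : Fin n} : rightLarger π i = 0 ↔ IsRLMax π i := by
  simp only [rightLarger, Finset.card_eq_zero, filter_eq_empty_iff, mem_univ, true_implies,
    not_and, not_lt, IsRLMax]
  exact forall_congr' fun j => imp_congr_right fun (hij : i < j) =>
    (π.injective.ne hij.ne').le_iff_lt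

theorem rlmax_add_card_rightLarger_ne_zero : rlmax π + #{i | rightLarger π i ≠ 0} = n := by
  simp only [rlmax, Nat.card_eq_fintype_card, Fintype.card_subtype, ← rightLarger_eq_zero_iff]
  rw [card_filter_add_card_filter_not, Finset.card_univ, Fintype.card_fin]

theorem one_lt_rightLarger_iff {i : Fin n} :
    1 < rightLarger π i ↔ ∃ j k, i < j ∧ j < k ∧ π i < π j ∧ π i < π k := by
  rw [rightLarger, one_lt_card]
  constructor
  · rintro ⟨j, hj, k, hk, hjk⟩
    simp only [mem_filter, mem_univ, true_and] at hj hk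
    rcases hjk.lt_or_gt with hlt | hgt
    · exact ⟨j, k, hj.1, hlt, hj.2, hk.2⟩
    · exact ⟨k, j, hk.1, hgt, hk.2, hj.2⟩
  · rintro ⟨j, k, hij, hjk, hj, hk⟩
    exact ⟨j, by simp [hij, hj], k, by simp [hij.trans hjk, hk], hjk.ne⟩

theorem avoids123_and_avoids132_iff : Avoids123 π ∧ Avoids132 π ↔ ∀ i, rightLarger π i ≤ 1 := by
  constructor
  · rintro ⟨h123, h132⟩ i
    by_contra! h
    obtain ⟨j, k, hij, hjk, hj, hk⟩ := (one_lt_rightLarger_iff π).1 h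
    rcases lt_or_gt_of_ne (π.injective.ne hjk.ne) with hlt | hgt
    · exact h123 ⟨i, j, k, hij, hjk, hj, hlt⟩
    · exact h132 ⟨i, j, k, hij, hjk, hk, hgt⟩
  · intro h
    constructor <;> rintro ⟨i, j, k, hij, hjk, h1, h2⟩ <;> refine (h i).not_gt ?_ <;>
      rw [one_lt_rightLarger_iff]
    · exact ⟨j, k, hij, hjk, h1, h1.trans h2⟩
    · exact ⟨j, k, hij, hjk, h1.trans h2, h1⟩

def suffixValues (i : Fin n) : Finset (Fin n) := {v | i ≤ π.symm v}

theorem apply_mem_suffixValues (i : Fin n) : π i ∈ suffixValues π i := by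
  simp [suffixValues]

theorem rightLarger_eq_card_suffixValues (i : Fin n) :
    rightLarger π i = #{v ∈ suffixValues π i | π i < v} := by
  refine card_equiv π fun j => ?_
  simp only [suffixValues, mem_filter, mem_univ, true_and, Equiv.symm_apply_apply]
  exact and_congr_left fun hj => (π.injective.ne_iff.1 hj.ne).le_iff_lt.symm

variable {π}

theorem suffixValues_congr {σ : Equiv.Perm (Fin n)} {i : Fin n} (hagree : ∀ j < i, π j = σ j) :
    suffixValues π i = suffixValues σ i := by
  have symm_lt {τ τ' : Equiv.Perm (Fin n)} (h : ∀ j < i, τ j = τ' j) {v : Fin n}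
      (hv : τ.symm v < i) : τ'.symm v < i := by
    rwa [τ'.symm_apply_eq.2 (by rw [← h _ hv, τ.apply_symm_apply])]
  refine filter_congr fun v _ => ?_
  simp only [← not_lt]
  exact not_congr ⟨symm_lt hagree, symm_lt fun j hj => (hagree j hj).symm⟩

theorem rightLarger_injective : Function.Injective (rightLarger (n := n)) := by
  intro π σ h
  ext i
  induction i using WellFoundedLT.induction with
  | _ i ih =>
    have hsuffix := suffixValues_congr fun j hj => Fin.ext (ih j hj)
    refine congrArg Fin.val ((strictAntiOn_card_filter_lt (suffixValues π i)).injOn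
      (apply_mem_suffixValues π i) (hsuffix ▸ apply_mem_suffixValues σ i) ?_)
    simpa only [rightLarger_eq_card_suffixValues, hsuffix] using congrFun h i

theorem exists_rightLarger_eq (c : Fin n → ℕ) (hc : ∀ i, c i < n - i) :
    ∃ π : Equiv.Perm (Fin n), rightLarger π = c := by
  have himage : univ.image rightLarger = Fintype.piFinset fun i : Fin n => range (n - i) := by
    refine eq_of_subset_of_card_le (fun c hc => ?_) ?_
    · obtain ⟨π, -, rfl⟩ := mem_image.1 hc
      exact Fintype.mem_piFinset.2 fun i => mem_range.2 (rightLarger_lt π i)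
    · rw [card_image_of_injective _ rightLarger_injective, Fintype.card_piFinset, Finset.card_univ,
        Fintype.card_perm, Fintype.card_fin]
      simp only [card_range, Fin.prod_univ_sub_eq_factorial, le_refl]
  have hmem : c ∈ univ.image rightLarger :=
    himage ▸ Fintype.mem_piFinset.2 fun i => mem_range.2 (hc i)
  simpa using hmem

theorem card_rightLarger_le_one_eq_card_powersetCard (m : ℕ) :
    #{π : Equiv.Perm (Fin n) | (∀ i, rightLarger π i ≤ 1) ∧ #{i | rightLarger π i ≠ 0} = m} =
      #(powersetCard m {i : Fin n | (i : ℕ) < n - 1}) := by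
  refine card_bij (fun π _ => ({i | rightLarger π i ≠ 0} : Finset (Fin n))) (fun π hπ => ?_)
    (fun π hπ σ hσ h => ?_) (fun s hs => ?_)
  · simp only [mem_filter, mem_univ, true_and] at hπ
    refine mem_powersetCard.2 ⟨fun i hi => ?_, hπ.2⟩
    have := rightLarger_lt π i
    simp only [mem_filter, mem_univ, true_and] at hi ⊢
    omega
  · simp only [mem_filter, mem_univ, true_and] at hπ hσ
    refine rightLarger_injective (funext fun i => ?_)
    have := hπ.1 i
    have := hσ.1 i
    have := congrArg (i ∈ ·) h
    simp only [mem_filter, mem_univ, true_and, eq_iff_iff] at this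
    omega
  · obtain ⟨hsub, hcard⟩ := mem_powersetCard.1 hs
    obtain ⟨π, hπ⟩ := exists_rightLarger_eq (fun i => if i ∈ s then 1 else 0) fun i => by
      split_ifs with hi
      · have := hsub hi
        simp only [mem_filter, mem_univ, true_and] at this
        omega
      · omega
    have hsupport : ({i | rightLarger π i ≠ 0} : Finset (Fin n)) = s := by
      ext i
      simp [hπ]
    refine ⟨π, ?_, hsupport⟩
    simp only [mem_filter, mem_univ, true_and, hsupport, hcard, and_true]
    intro i
    simp only [hπ]
    split_ifs <;> omega

end RightLarger

theorem card_avoid_123_132_with_rlmax_general (n k : ℕ) (hk1 : 1 ≤ k) (hk2 : k ≤ n) :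
    Nat.card {π : Equiv.Perm (Fin n) // (Avoids123 π ∧ Avoids132 π) ∧ rlmax π = k} =
      Nat.choose (n - 1) (k - 1) := by
  classical
  have hrlmax (π : Equiv.Perm (Fin n)) : rlmax π = k ↔ #{i | rightLarger π i ≠ 0} = n - k := by
    have := rlmax_add_card_rightLarger_ne_zero π
    omega
  rw [Nat.card_eq_fintype_card, Fintype.card_subtype]
  simp only [avoids123_and_avoids132_iff, hrlmax]
  rw [card_rightLarger_le_one_eq_card_powersetCard, card_powersetCard, Fin.card_filter_val_lt, min_eq_right (by omega)]
  exact Nat.choose_symm_of_eq_add (by omega)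

theorem card_avoid_123_132_with_rlmax (n k : ℕ) (hn : 1 ≤ n) (hk1 : 1 ≤ k) (hk2 : k ≤ n) :
    Nat.card {π : Equiv.Perm (Fin n) // (Avoids123 π ∧ Avoids132 π) ∧ rlmax π = k} =
      Nat.choose (n - 1) (k - 1) :=
  card_avoid_123_132_with_rlmax_general n k hk1 hk2
end
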